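/- arXiv:2304.05878 — 3 statements merged into one kernel-verified Lean document; each statement's English description precedes it below -/
import Mathlib

section
/- For every irreducible reversible Markov chain on a finite state space V with stationary distribution π and relaxation time t_rel, and every A ⊊ V with π(A) ≥ 1/2, the expected hitting time of A started from π conditioned on A^c satisfies E_{π_{A^c}}[T_A] ≤ 2 t_rel. More generally, E_{π_{A^c}}[T_A] ≤ t_rel/π(A) for any nonempty A ⊊ V. -/
open Finset Matrix

section Defs
variable {V : Type*} [Fintype V] [DecidableEq V]

/-- `P` is a stochastic matrix: nonneg entries, rows sum to 1. -/
def IsStochastic (P : Matrix V V ℝ) : Prop :=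
  (∀ x y, 0 ≤ P x y) ∧ ∀ x, ∑ y, P x y = 1

/-- `P` is irreducible. -/
def IsIrreducibleMat (P : Matrix V V ℝ) : Prop :=
  ∀ x y, ∃ n : ℕ, 0 < (P ^ n) x y

/-- `P` is reversible w.r.t. `π`. -/
def IsReversible (P : Matrix V V ℝ) (π : V → ℝ) : Prop :=
  ∀ x y, π x * P x y = π y * P y x

/-- Restriction `P_B` of `P` to the set `B` (kept as a `V × V` matrix). -/
def res (P : Matrix V V ℝ) (B : Finset V) : Matrix V V ℝ :=
  fun x y => if x ∈ B ∧ y ∈ B then P x y else 0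

/-- `ℙ_μ[T_{Bᶜ} > m]`: the chain started from `μ` stays in `B` for steps `0,…,m`. -/
def survGT (P : Matrix V V ℝ) (μ : V → ℝ) (B : Finset V) (m : ℕ) : ℝ :=
  ∑ x, ∑ y, μ x * (res P B ^ m) x y

/-- `E_μ[T_{Bᶜ}]`, the expected exit time from `B` started from `μ`. -/
noncomputable def expExit (P : Matrix V V ℝ) (μ : V → ℝ) (B : Finset V) : ℝ :=
  ∑' m : ℕ, survGT P μ B m

/-- `π` conditioned on `B`. -/
noncomputable def condOn (π : V → ℝ) (B : Finset V) : V → ℝ :=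
  fun x => if x ∈ B then π x / (∑ b ∈ B, π b) else 0

/-- The largest (real) eigenvalue of a matrix. -/
noncomputable def topEigM (M : Matrix V V ℝ) : ℝ :=
  sSup {β : ℝ | ∃ f : V → ℝ, f ≠ 0 ∧ M *ᵥ f = β • f}

/-- `β(B)`: the largest eigenvalue of the restriction `P_B`. -/
noncomputable def topEig (P : Matrix V V ℝ) (B : Finset V) : ℝ :=
  topEigM (res P B)

/-- The second largest eigenvalue of `P`. -/
noncomputable def secondEig (P : Matrix V V ℝ) : ℝ :=
  sSup {β : ℝ | β ≠ 1 ∧ ∃ f : V → ℝ, f ≠ 0 ∧ P *ᵥ f = β • f}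

end Defs


set_option linter.unusedSectionVars false
set_option linter.unusedSectionVars false
section Aux
variable {V : Type*} [Fintype V] [DecidableEq V]

lemma st6_pow_nonneg {M : Matrix V V ℝ} (h : ∀ x y, 0 ≤ M x y) (m : ℕ) :
    ∀ x y, 0 ≤ (M ^ m) x y := by
  induction m with
  | zero => intro x y; by_cases hxy : x = y <;> simp [pow_zero, Matrix.one_apply, hxy]
  | succ m ih =>
      intro x y
      rw [pow_succ, Matrix.mul_apply]
      exact Finset.sum_nonneg fun z _ => mul_nonneg (ih x z) (h z y)

lemma st6_pow_row {M : Matrix V V ℝ} (h : ∀ x, ∑ y, M x y = 1) (m : ℕ) :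
    ∀ x, ∑ y, (M ^ m) x y = 1 := by
  induction m with
  | zero => intro x; simp [Matrix.one_apply]
  | succ m ih =>
      intro x
      simp only [pow_succ, Matrix.mul_apply]
      rw [Finset.sum_comm]
      calc ∑ z, ∑ y, (M ^ m) x z * M z y = ∑ z, (M ^ m) x z * ∑ y, M z y := by
            simp [Finset.mul_sum]
        _ = 1 := by simp only [h, mul_one]; exact ih x

/-- substochastic eigenvalue bound -/
lemma st6_eig_abs_le {M : Matrix V V ℝ} (hnn : ∀ x y, 0 ≤ M x y)
    (hrow : ∀ x, ∑ y, M x y ≤ 1) {β : ℝ} {f : V → ℝ} (hf : f ≠ 0)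
    (h : M *ᵥ f = β • f) : |β| ≤ 1 := by
  have hne : Finset.univ.Nonempty (α := V) := by
    rcases Function.ne_iff.1 hf with ⟨z, _⟩
    exact ⟨z, Finset.mem_univ z⟩
  obtain ⟨x₀, -, hx₀⟩ := Finset.exists_max_image Finset.univ (fun x => |f x|) hne
  have hfx₀ : 0 < |f x₀| := by
    rcases Function.ne_iff.1 hf with ⟨z, hz⟩
    exact lt_of_lt_of_le (abs_pos.2 hz) (hx₀ z (Finset.mem_univ z))
  have key : |β| * |f x₀| ≤ |f x₀| := by
    have h1 : |β * f x₀| = |(M *ᵥ f) x₀| := by rw [h]; simp [Pi.smul_apply]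
    rw [abs_mul] at h1
    rw [h1]
    calc |(M *ᵥ f) x₀| ≤ ∑ y, |M x₀ y * f y| := by
          rw [Matrix.mulVec, dotProduct]; exact Finset.abs_sum_le_sum_abs _ _
      _ ≤ ∑ y, M x₀ y * |f x₀| := by
          refine Finset.sum_le_sum fun y _ => ?_
          rw [abs_mul, abs_of_nonneg (hnn x₀ y)]
          exact mul_le_mul_of_nonneg_left (hx₀ y (Finset.mem_univ y)) (hnn x₀ y)
      _ = (∑ y, M x₀ y) * |f x₀| := by rw [Finset.sum_mul]
      _ ≤ |f x₀| := by
          have := hrow x₀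
          nlinarith [abs_nonneg (f x₀)]
  exact le_of_mul_le_mul_right (by linarith) hfx₀

/-- constancy of harmonic functions for irreducible stochastic matrices -/
lemma st6_const {P : Matrix V V ℝ} (hP : IsStochastic P) (hirr : IsIrreducibleMat P)
    {f : V → ℝ} (h : P *ᵥ f = f) (y z : V) : f y = f z := by
  have hpow : ∀ n, P ^ n *ᵥ f = f := by
    intro n
    induction n with
    | zero => simp
    | succ n ih => rw [pow_succ', ← Matrix.mulVec_mulVec, ih, h]
  have hne : Finset.univ.Nonempty (α := V) := ⟨y, Finset.mem_univ y⟩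
  obtain ⟨x₀, -, hx₀⟩ := Finset.exists_max_image Finset.univ f hne
  have main : ∀ u, f u = f x₀ := by
    intro u
    obtain ⟨n, hn⟩ := hirr x₀ u
    have hsum : ∑ w, (P ^ n) x₀ w * (f x₀ - f w) = 0 := by
      have h1 : ∑ w, (P ^ n) x₀ w * f w = f x₀ := by
        have := congrFun (hpow n) x₀
        rwa [Matrix.mulVec, dotProduct] at this
      have h2 : ∑ w, (P ^ n) x₀ w * f x₀ = f x₀ := by
        rw [← Finset.sum_mul, st6_pow_row hP.2 n x₀, one_mul]
      rw [Finset.sum_congr rfl (fun w _ => mul_sub ((P ^ n) x₀ w) (f x₀) (f w)),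
        Finset.sum_sub_distrib, h1, h2, sub_self]
    have hterm : ∀ w ∈ Finset.univ, 0 ≤ (P ^ n) x₀ w * (f x₀ - f w) := fun w _ =>
      mul_nonneg (st6_pow_nonneg hP.1 n x₀ w) (by linarith [hx₀ w (Finset.mem_univ w)])
    have := (Finset.sum_eq_zero_iff_of_nonneg hterm).1 hsum u (Finset.mem_univ u)
    rcases mul_eq_zero.1 this with h' | h'
    · exact absurd h' (ne_of_gt hn)
    · linarith
  rw [main y, main z]

end Aux

section Conj
variable {V : Type*} [Fintype V] [DecidableEq V]

noncomputable def st6s (π : V → ℝ) : V → ℝ := fun x => Real.sqrt (π x)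

noncomputable def st6S (M : Matrix V V ℝ) (π : V → ℝ) : Matrix V V ℝ :=
  Matrix.diagonal (st6s π) * M * Matrix.diagonal (fun x => (st6s π x)⁻¹)

lemma st6s_pos {π : V → ℝ} (hπ : ∀ x, 0 < π x) (x : V) : 0 < st6s π x :=
  Real.sqrt_pos.2 (hπ x)

lemma st6s_sq {π : V → ℝ} (hπ : ∀ x, 0 < π x) (x : V) : st6s π x * st6s π x = π x :=
  Real.mul_self_sqrt (hπ x).le

lemma st6S_apply (M : Matrix V V ℝ) (π : V → ℝ) (x y : V) :
    st6S M π x y = st6s π x * M x y * (st6s π y)⁻¹ := by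
  simp [st6S, Matrix.mul_apply, Matrix.diagonal, Finset.sum_ite_eq, Finset.sum_ite_eq']

lemma st6S_herm {M : Matrix V V ℝ} {π : V → ℝ} (hπ : ∀ x, 0 < π x)
    (hrev : IsReversible M π) : (st6S M π).IsHermitian := by
  ext x y
  simp only [Matrix.conjTranspose_apply, st6S_apply, star_trivial]
  have h := hrev y x
  have hx := st6s_pos hπ x
  have hy := st6s_pos hπ y
  have hsx := st6s_sq hπ x
  have hsy := st6s_sq hπ y
  field_simp
  linear_combination h + M y x * hsy - M x y * hsx

lemma st6S_mulVec {M : Matrix V V ℝ} {π : V → ℝ} (hπ : ∀ x, 0 < π x) (f : V → ℝ) :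
    st6S M π *ᵥ (fun x => st6s π x * f x) = fun x => st6s π x * (M *ᵥ f) x := by
  funext x
  simp only [Matrix.mulVec, dotProduct, st6S_apply]
  rw [Finset.mul_sum]
  refine Finset.sum_congr rfl fun y _ => ?_
  have : (st6s π y)⁻¹ * (st6s π y) = 1 := inv_mul_cancel₀ (st6s_pos hπ y).ne'
  linear_combination (st6s π x * M x y * f y) * this

lemma st6S_pow {M : Matrix V V ℝ} {π : V → ℝ} (hπ : ∀ x, 0 < π x) (m : ℕ) :
    (st6S M π) ^ m = st6S (M ^ m) π := by
  induction m with
  | zero =>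
      simp only [pow_zero, st6S]
      rw [Matrix.mul_one, Matrix.diagonal_mul_diagonal]
      have h1 : (fun x => st6s π x * (st6s π x)⁻¹) = fun _ => (1:ℝ) :=
        funext fun x => mul_inv_cancel₀ (st6s_pos hπ x).ne'
      rw [h1, Matrix.diagonal_one]
  | succ m ih =>
      rw [pow_succ, ih, pow_succ, st6S, st6S, st6S]
      have hDD : (Matrix.diagonal (fun x => (st6s π x)⁻¹) * Matrix.diagonal (st6s π))
          = (1 : Matrix V V ℝ) := by
        have h1 : (fun x => (st6s π x)⁻¹ * st6s π x) = fun _ => (1:ℝ) :=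
          funext fun x => inv_mul_cancel₀ (st6s_pos hπ x).ne'
        rw [Matrix.diagonal_mul_diagonal, h1, Matrix.diagonal_one]
      calc Matrix.diagonal (st6s π) * M ^ m * Matrix.diagonal (fun x => (st6s π x)⁻¹) *
            (Matrix.diagonal (st6s π) * M * Matrix.diagonal (fun x => (st6s π x)⁻¹))
          = Matrix.diagonal (st6s π) * M ^ m *
            (Matrix.diagonal (fun x => (st6s π x)⁻¹) * Matrix.diagonal (st6s π)) * M *
            Matrix.diagonal (fun x => (st6s π x)⁻¹) := by
            simp only [Matrix.mul_assoc]
        _ = Matrix.diagonal (st6s π) * (M ^ m * M) * Matrix.diagonal (fun x => (st6s π x)⁻¹) := by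
            rw [hDD, Matrix.mul_one]
            simp only [Matrix.mul_assoc]

lemma st6_res_rev {P : Matrix V V ℝ} {π : V → ℝ} (hrev : IsReversible P π) (B : Finset V) :
    IsReversible (res P B) π := by
  intro x y
  unfold res
  by_cases hx : x ∈ B <;> by_cases hy : y ∈ B <;> simp [hx, hy, hrev x y]

lemma st6_stat {P : Matrix V V ℝ} {π : V → ℝ} (hP : IsStochastic P)
    (hrev : IsReversible P π) (y : V) : ∑ x, π x * P x y = π y := by
  calc ∑ x, π x * P x y = ∑ x, π y * P y x := Finset.sum_congr rfl fun x _ => hrev x y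
    _ = π y := by rw [← Finset.mul_sum, hP.2 y, mul_one]

end Conj

section Spectral
open scoped RealInnerProductSpace
variable {V : Type*} [Fintype V] [DecidableEq V]

def st6_toE {V : Type*} [Fintype V] (x : V → ℝ) : EuclideanSpace ℝ V := WithLp.toLp 2 x

lemma st6_powEig {M : Matrix V V ℝ} (hM : M.IsHermitian) (m : ℕ) (i : V) :
    (M ^ m) *ᵥ ⇑(hM.eigenvectorBasis i) = (hM.eigenvalues i ^ m) • ⇑(hM.eigenvectorBasis i) := by
  induction m with
  | zero => simp
  | succ m ih =>
      rw [pow_succ', pow_succ', ← Matrix.mulVec_mulVec, ih, Matrix.mulVec_smul,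
        hM.mulVec_eigenvectorBasis, smul_smul]
      ring_nf

lemma st6_transpose {M : Matrix V V ℝ} (hM : M.IsHermitian) : Mᵀ = M := by
  ext i j
  rw [Matrix.transpose_apply]
  conv_rhs => rw [← hM.eq]
  simp [Matrix.conjTranspose_apply]

lemma st6_symm_dot {M : Matrix V V ℝ} (hM : M.IsHermitian) (x y : V → ℝ) :
    x ⬝ᵥ (M *ᵥ y) = (M *ᵥ x) ⬝ᵥ y := by
  rw [dotProduct_mulVec, ← Matrix.mulVec_transpose, st6_transpose hM]

lemma st6_quadform {M : Matrix V V ℝ} (hM : M.IsHermitian) (m : ℕ) (v : V → ℝ) :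
    v ⬝ᵥ ((M ^ m) *ᵥ v)
      = ∑ i, hM.eigenvalues i ^ m * (⇑(hM.eigenvectorBasis i) ⬝ᵥ v) ^ 2 := by
  have h := (hM.eigenvectorBasis).sum_inner_mul_inner (st6_toE v) (st6_toE ((M ^ m) *ᵥ v))
  have hv : ⟪st6_toE v, st6_toE ((M ^ m) *ᵥ v)⟫ = v ⬝ᵥ ((M ^ m) *ᵥ v) := by
    rw [PiLp.inner_apply]; simp [dotProduct, st6_toE]
    exact Finset.sum_congr rfl fun _ _ => mul_comm _ _
  rw [hv] at h
  rw [← h]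
  refine Finset.sum_congr rfl fun i _ => ?_
  have h1 : ⟪st6_toE v, hM.eigenvectorBasis i⟫ = ⇑(hM.eigenvectorBasis i) ⬝ᵥ v := by
    rw [PiLp.inner_apply]; simp [dotProduct, st6_toE, mul_comm]
  have h2 : ⟪hM.eigenvectorBasis i, st6_toE ((M ^ m) *ᵥ v)⟫
      = ⇑(hM.eigenvectorBasis i) ⬝ᵥ ((M ^ m) *ᵥ v) := by
    rw [PiLp.inner_apply]; simp [dotProduct, st6_toE]
    exact Finset.sum_congr rfl fun _ _ => mul_comm _ _
  rw [h1, h2, st6_symm_dot (hM.pow m), st6_powEig hM m i]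
  simp only [smul_dotProduct, smul_eq_mul]
  ring

lemma st6_quadform1 {M : Matrix V V ℝ} (hM : M.IsHermitian) (v : V → ℝ) :
    v ⬝ᵥ (M *ᵥ v) = ∑ i, hM.eigenvalues i * (⇑(hM.eigenvectorBasis i) ⬝ᵥ v) ^ 2 := by
  have := st6_quadform hM 1 v
  simpa using this

lemma st6_quadform0 {M : Matrix V V ℝ} (hM : M.IsHermitian) (v : V → ℝ) :
    v ⬝ᵥ v = ∑ i, (⇑(hM.eigenvectorBasis i) ⬝ᵥ v) ^ 2 := by
  have := st6_quadform hM 0 v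
  simpa using this

lemma st6_basis_dot_self {M : Matrix V V ℝ} (hM : M.IsHermitian) (i : V) :
    ⇑(hM.eigenvectorBasis i) ⬝ᵥ ⇑(hM.eigenvectorBasis i) = 1 := by
  have h := hM.eigenvectorBasis.orthonormal.1 i
  have h2 : ⟪hM.eigenvectorBasis i, hM.eigenvectorBasis i⟫
      = ⇑(hM.eigenvectorBasis i) ⬝ᵥ ⇑(hM.eigenvectorBasis i) := by
    rw [PiLp.inner_apply]; simp [dotProduct]
    exact Finset.sum_congr rfl fun _ _ => sq _
  rw [← h2, real_inner_self_eq_norm_sq, h]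
  norm_num

variable {P : Matrix V V ℝ} {π : V → ℝ}

/-- transfer: eigenvector of `P` gives eigenvalue of `S`. -/
lemma st6_eigS_exists (hπpos : ∀ x, 0 < π x) (hS : (st6S P π).IsHermitian)
    {β : ℝ} {f : V → ℝ} (hf : f ≠ 0) (heig : P *ᵥ f = β • f) :
    ∃ i, hS.eigenvalues i = β := by
  set v : V → ℝ := fun x => st6s π x * f x with hvdef
  have hv : st6S P π *ᵥ v = β • v := by
    rw [hvdef, st6S_mulVec hπpos, heig]
    funext x
    simp [mul_comm, mul_left_comm]
  have hvne : v ≠ 0 := by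
    rcases Function.ne_iff.1 hf with ⟨z, hz⟩
    exact Function.ne_iff.2 ⟨z, mul_ne_zero (st6s_pos hπpos z).ne' hz⟩
  by_contra hcon
  push_neg at hcon
  have hci : ∀ i, ⇑(hS.eigenvectorBasis i) ⬝ᵥ v = 0 := by
    intro i
    have h1 : ⇑(hS.eigenvectorBasis i) ⬝ᵥ (st6S P π *ᵥ v)
        = hS.eigenvalues i * (⇑(hS.eigenvectorBasis i) ⬝ᵥ v) := by
      rw [st6_symm_dot hS, hS.mulVec_eigenvectorBasis]
      simp [smul_dotProduct]
    have h2 : ⇑(hS.eigenvectorBasis i) ⬝ᵥ (st6S P π *ᵥ v)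
        = β * (⇑(hS.eigenvectorBasis i) ⬝ᵥ v) := by
      rw [hv]
      simp [dotProduct_smul]
    have := h1.symm.trans h2
    rcases mul_eq_mul_right_iff.1 this with h | h
    · exact absurd h (hcon i)
    · exact h
  have : v ⬝ᵥ v = 0 := by
    rw [st6_quadform0 hS v]
    refine Finset.sum_eq_zero fun i _ => ?_
    rw [hci i]; ring
  exact hvne ((dotProduct_self_eq_zero).1 this)

/-- transfer: eigenvalue of `S` gives eigenvector of `P`. -/
lemma st6_eigP_of_i (hπpos : ∀ x, 0 < π x) (hS : (st6S P π).IsHermitian) (i : V) :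
    ∃ f : V → ℝ, f ≠ 0 ∧ (fun x => st6s π x * f x) = ⇑(hS.eigenvectorBasis i) ∧
      P *ᵥ f = hS.eigenvalues i • f := by
  set f : V → ℝ := fun x => ⇑(hS.eigenvectorBasis i) x / st6s π x with hfdef
  have hsf : (fun x => st6s π x * f x) = ⇑(hS.eigenvectorBasis i) := by
    funext x
    rw [hfdef]
    exact mul_div_cancel₀ _ (st6s_pos hπpos x).ne'
  have hfne : f ≠ 0 := by
    intro h0
    have hb0 : ⇑(hS.eigenvectorBasis i) = (0 : V → ℝ) := by
      rw [← hsf, h0]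
      funext x; simp
    have := st6_basis_dot_self hS i
    rw [hb0] at this
    simp at this
  refine ⟨f, hfne, hsf, ?_⟩
  have h1 := st6S_mulVec (M := P) hπpos f
  rw [hsf, hS.mulVec_eigenvectorBasis] at h1
  funext x
  have h2 := congrFun h1 x
  have h3 := congrFun hsf x
  simp only [Pi.smul_apply, smul_eq_mul] at h2 ⊢
  have hs := (st6s_pos hπpos x).ne'
  apply mul_left_cancel₀ hs
  rw [← h2, ← h3]
  ring

end Spectral

section SecondEig
open scoped RealInnerProductSpace
variable {V : Type*} [Fintype V] [DecidableEq V] {P : Matrix V V ℝ} {π : V → ℝ}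

lemma st6_exists_ne_one (hP : IsStochastic P) (hirr : IsIrreducibleMat P)
    (hπpos : ∀ x, 0 < π x) (hS : (st6S P π).IsHermitian) (hxy : ∃ x y : V, x ≠ y) :
    ∃ i, hS.eigenvalues i ≠ 1 := by
  by_contra hcon
  push_neg at hcon
  have hPf : ∀ f : V → ℝ, P *ᵥ f = f := by
    intro f
    set v : V → ℝ := fun x => st6s π x * f x with hvdef
    set a : V → ℝ := st6S P π *ᵥ v with hadef
    have haa : a ⬝ᵥ a = ∑ i, (⇑(hS.eigenvectorBasis i) ⬝ᵥ v) ^ 2 := by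
      have h1 : v ⬝ᵥ (st6S P π *ᵥ a) = a ⬝ᵥ a := by
        rw [st6_symm_dot hS v a, hadef]
      have h2 : st6S P π *ᵥ a = (st6S P π ^ 2) *ᵥ v := by
        rw [hadef, Matrix.mulVec_mulVec, sq]
      rw [← h1, h2, st6_quadform hS 2 v]
      refine Finset.sum_congr rfl fun i _ => ?_
      rw [hcon i]; ring
    have hav : a ⬝ᵥ v = ∑ i, (⇑(hS.eigenvectorBasis i) ⬝ᵥ v) ^ 2 := by
      rw [dotProduct_comm, hadef, st6_quadform1 hS v]
      refine Finset.sum_congr rfl fun i _ => ?_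
      rw [hcon i]; ring
    have hvv : v ⬝ᵥ v = ∑ i, (⇑(hS.eigenvectorBasis i) ⬝ᵥ v) ^ 2 := st6_quadform0 hS v
    have hzero : (a - v) ⬝ᵥ (a - v) = 0 := by
      rw [sub_dotProduct, dotProduct_sub, dotProduct_sub,
        dotProduct_comm v a]
      rw [haa, hav, hvv]
      ring
    have hav2 : a = v := sub_eq_zero.1 (dotProduct_self_eq_zero.1 hzero)
    have h3 := st6S_mulVec (M := P) hπpos f
    rw [← hvdef] at h3
    rw [← hadef] at h3
    rw [hav2] at h3
    funext x
    have h4 := congrFun h3 x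
    rw [hvdef] at h4
    exact (mul_left_cancel₀ (st6s_pos hπpos x).ne' h4.symm)
  have hpow : ∀ n (f : V → ℝ), (P ^ n) *ᵥ f = f := by
    intro n f
    induction n with
    | zero => simp
    | succ n ih => rw [pow_succ', ← Matrix.mulVec_mulVec, ih, hPf]
  obtain ⟨x₀, y₀, hxy₀⟩ := hxy
  obtain ⟨n, hn⟩ := hirr x₀ y₀
  have h5 := congrFun (hpow n (Pi.single y₀ 1)) x₀
  have h6 : ((P ^ n) *ᵥ Pi.single y₀ 1) x₀ = (P ^ n) x₀ y₀ := by
    simp [Matrix.mulVec_single]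
  rw [h6, Pi.single_eq_of_ne hxy₀] at h5
  rw [h5] at hn
  exact lt_irrefl 0 hn

lemma st6_secondEig_spec (hP : IsStochastic P) (hirr : IsIrreducibleMat P)
    (hπpos : ∀ x, 0 < π x) (hS : (st6S P π).IsHermitian) (hxy : ∃ x y : V, x ≠ y) :
    secondEig P < 1 ∧ (∀ i, hS.eigenvalues i ≠ 1 → hS.eigenvalues i ≤ secondEig P) := by
  set E : Set ℝ := {β : ℝ | β ≠ 1 ∧ ∃ f : V → ℝ, f ≠ 0 ∧ P *ᵥ f = β • f} with hEdef
  have hsub : E ⊆ Set.range hS.eigenvalues := by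
    rintro β ⟨h1, f, hf, heig⟩
    obtain ⟨i, hi⟩ := st6_eigS_exists hπpos hS hf heig
    exact ⟨i, hi⟩
  have hfin : E.Finite := (Set.finite_range _).subset hsub
  have hmem_of : ∀ i, hS.eigenvalues i ≠ 1 → hS.eigenvalues i ∈ E := by
    intro i hi
    obtain ⟨f, hfne, _, heig⟩ := st6_eigP_of_i hπpos hS i
    exact ⟨hi, f, hfne, heig⟩
  obtain ⟨i₀, hi₀⟩ := st6_exists_ne_one hP hirr hπpos hS hxy
  have hne : E.Nonempty := ⟨_, hmem_of i₀ hi₀⟩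
  have hmem : sSup E ∈ E := hne.csSup_mem hfin
  have hsec : secondEig P = sSup E := rfl
  constructor
  · obtain ⟨hne1, f, hf, heig⟩ := hmem
    have habs := st6_eig_abs_le hP.1 (fun x => le_of_eq (hP.2 x)) hf heig
    rw [hsec]
    exact lt_of_le_of_ne (le_trans (le_abs_self _) habs) hne1
  · intro i hi
    rw [hsec]
    exact le_csSup hfin.bddAbove (hmem_of i hi)

lemma st6_simple (hP : IsStochastic P) (hirr : IsIrreducibleMat P)
    (hπpos : ∀ x, 0 < π x) (hS : (st6S P π).IsHermitian) (x₀ : V)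
    (i : V) (hi : hS.eigenvalues i = 1) :
    ∃ c : ℝ, ⇑(hS.eigenvectorBasis i) = fun x => c * st6s π x := by
  obtain ⟨f, hfne, hsf, heig⟩ := st6_eigP_of_i hπpos hS i
  rw [hi, one_smul] at heig
  refine ⟨f x₀, ?_⟩
  funext x
  rw [← congrFun hsf x, st6_const hP hirr heig x x₀]
  ring

lemma st6_gap (hP : IsStochastic P) (hirr : IsIrreducibleMat P)
    (hπpos : ∀ x, 0 < π x) (hS : (st6S P π).IsHermitian) (hxy : ∃ x y : V, x ≠ y)
    (w : V → ℝ) (hw : w ⬝ᵥ st6s π = 0) :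
    w ⬝ᵥ (st6S P π *ᵥ w) ≤ secondEig P * (w ⬝ᵥ w) := by
  obtain ⟨-, hle⟩ := st6_secondEig_spec hP hirr hπpos hS hxy
  obtain ⟨x₀, -, -⟩ := hxy
  rw [st6_quadform1 hS w, st6_quadform0 hS w, Finset.mul_sum]
  refine Finset.sum_le_sum fun i _ => ?_
  by_cases hi : hS.eigenvalues i = 1
  · obtain ⟨c, hc⟩ := st6_simple hP hirr hπpos hS x₀ i hi
    have hci : ⇑(hS.eigenvectorBasis i) ⬝ᵥ w = 0 := by
      rw [hc]
      unfold dotProduct at hw ⊢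
      show ∑ x, (c * st6s π x) * w x = 0
      calc ∑ x, (c * st6s π x) * w x = c * ∑ x, w x * st6s π x := by
            rw [Finset.mul_sum]; exact Finset.sum_congr rfl fun x _ => by ring
        _ = 0 := by rw [hw]; ring
    rw [hci]
    simp
  · exact mul_le_mul_of_nonneg_right (hle i hi) (sq_nonneg _)

end SecondEig

section Geo

lemma st6_geo_nonneg {lam : ℝ} (h0 : 0 ≤ lam) (h1 : lam < 1) (n : ℕ) :
    ∑ m ∈ Finset.range n, lam ^ m ≤ (1 - lam)⁻¹ := by
  have hpos : 0 < 1 - lam := by linarith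
  have hgeom : (1 - lam) * ∑ m ∈ Finset.range n, lam ^ m = 1 - lam ^ n := by
    induction n with
    | zero => simp
    | succ n ih =>
        rw [geom_sum_succ']
        ring_nf
        ring_nf at ih
        nlinarith [ih]
  have hpow : 0 ≤ lam ^ n := pow_nonneg h0 n
  rw [inv_eq_one_div, le_div_iff₀ hpos, mul_comm]
  nlinarith

lemma st6_geo {ν lam : ℝ} (hν1 : -1 ≤ ν) (hνlam : ν ≤ lam) (hlam0 : 0 ≤ lam)
    (hlam1 : lam < 1) (n : ℕ) :
    ∑ m ∈ Finset.range n, ν ^ m ≤ (1 - lam)⁻¹ := by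
  rcases le_or_gt 0 ν with hν0 | hν0
  · calc ∑ m ∈ Finset.range n, ν ^ m ≤ ∑ m ∈ Finset.range n, lam ^ m :=
          Finset.sum_le_sum fun m _ => pow_le_pow_left₀ hν0 hνlam m
      _ ≤ (1 - lam)⁻¹ := st6_geo_nonneg hlam0 hlam1 n
  · have key : ∀ k : ℕ, 0 ≤ ∑ m ∈ Finset.range k, ν ^ m ∧ ∑ m ∈ Finset.range k, ν ^ m ≤ 1 := by
      intro k
      induction k with
      | zero => simp
      | succ k ih =>
          rw [geom_sum_succ]
          constructor
          · nlinarith [ih.1, ih.2]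
          · nlinarith [ih.1, ih.2]
    have h2 : 0 < 1 - lam := by linarith
    have h3 : (1:ℝ) ≤ (1 - lam)⁻¹ := by
      have := inv_anti₀ h2 (by linarith : 1 - lam ≤ 1)
      simpa using this
    exact le_trans (key n).2 h3

end Geo

section Bound1
variable {V : Type*} [Fintype V] [DecidableEq V] {P : Matrix V V ℝ} {π : V → ℝ}

/-- For any `u`, `⟨u, S u⟩ ≤ β₂ ⟨u,u⟩ + (1-β₂) ⟨u,s⟩²`. -/
lemma st6_bound1 (hP : IsStochastic P) (hirr : IsIrreducibleMat P)
    (hπpos : ∀ x, 0 < π x) (hπsum : ∑ x, π x = 1)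
    (hS : (st6S P π).IsHermitian) (hxy : ∃ x y : V, x ≠ y) (u : V → ℝ) :
    u ⬝ᵥ (st6S P π *ᵥ u) ≤ secondEig P * (u ⬝ᵥ u)
      + (1 - secondEig P) * (u ⬝ᵥ st6s π) ^ 2 := by
  set s : V → ℝ := st6s π with hsdef
  have hsg : st6S P π *ᵥ s = s := by
    have h1 : P *ᵥ (fun _ => (1:ℝ)) = fun _ => (1:ℝ) := by
      funext x
      simp only [Matrix.mulVec, dotProduct, mul_one]
      exact hP.2 x
    have h2 := st6S_mulVec (M := P) hπpos (fun _ => (1:ℝ))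
    rw [h1] at h2
    simpa using h2
  have hss : s ⬝ᵥ s = 1 := by
    unfold dotProduct
    rw [← hπsum]
    exact Finset.sum_congr rfl fun x _ => st6s_sq hπpos x
  set c : ℝ := u ⬝ᵥ s with hcdef
  set w : V → ℝ := u - c • s with hwdef
  have hwg : w ⬝ᵥ s = 0 := by
    rw [hwdef, sub_dotProduct, smul_dotProduct, hss, ← hcdef]
    simp
  have hgap := st6_gap hP hirr hπpos hS hxy w hwg
  have hSw : st6S P π *ᵥ w = st6S P π *ᵥ u - c • s := by
    rw [hwdef, Matrix.mulVec_sub, Matrix.mulVec_smul, hsg]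
  have hsu : s ⬝ᵥ (st6S P π *ᵥ u) = c := by
    rw [st6_symm_dot hS, hsg, dotProduct_comm]
  have hexp1 : w ⬝ᵥ (st6S P π *ᵥ w) = u ⬝ᵥ (st6S P π *ᵥ u) - c ^ 2 := by
    rw [hSw, hwdef]
    rw [sub_dotProduct, smul_dotProduct, dotProduct_sub,
      dotProduct_sub, dotProduct_smul, dotProduct_smul, hsu, hss,
      ← hcdef]
    simp only [smul_eq_mul]
    ring
  have hexp2 : w ⬝ᵥ w = u ⬝ᵥ u - c ^ 2 := by
    rw [hwdef, sub_dotProduct, smul_dotProduct, dotProduct_sub,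
      dotProduct_sub, dotProduct_smul, dotProduct_smul, hss,
      dotProduct_comm s u, ← hcdef]
    simp only [smul_eq_mul]
    ring
  rw [hexp1, hexp2] at hgap
  nlinarith [hgap]

end Bound1

set_option maxHeartbeats 2000000 in
/-- for every nonempty `A ⊊ V`, `E_{π_{Aᶜ}}[T_A] ≤ t_rel/π(A)`, and in
particular if `π(A) ≥ 1/2` then `E_{π_{Aᶜ}}[T_A] ≤ 2 t_rel`. -/
theorem stmt_6 {V : Type*} [Fintype V] [DecidableEq V]
    (P : Matrix V V ℝ) (π : V → ℝ)
    (hP : IsStochastic P) (hirr : IsIrreducibleMat P)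
    (hπpos : ∀ x, 0 < π x) (hπsum : ∑ x, π x = 1)
    (hrev : IsReversible P π)
    (A : Finset V) (hAne : A.Nonempty) (hAproper : A ≠ Finset.univ) :
    expExit P (condOn π Aᶜ) Aᶜ ≤ (1 - secondEig P)⁻¹ / (∑ x ∈ A, π x) ∧
    (1 / 2 ≤ ∑ x ∈ A, π x →
      expExit P (condOn π Aᶜ) Aᶜ ≤ 2 * (1 - secondEig P)⁻¹) := by
  classical
  set B : Finset V := Aᶜ with hBdef
  obtain ⟨a₀, ha₀⟩ := hAne
  have hBne : B.Nonempty := Finset.nonempty_iff_ne_empty.2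
    (fun h => hAproper ((Finset.compl_eq_empty_iff A).1 h))
  obtain ⟨b₀, hb₀⟩ := hBne
  have hb₀A : b₀ ∉ A := Finset.mem_compl.1 hb₀
  have hxy : ∃ x y : V, x ≠ y := ⟨a₀, b₀, fun h => hb₀A (h ▸ ha₀)⟩
  set πA : ℝ := ∑ x ∈ A, π x with hπAdef
  set πB : ℝ := ∑ x ∈ B, π x with hπBdef
  have hπA : 0 < πA := Finset.sum_pos (fun i _ => hπpos i) ⟨a₀, ha₀⟩
  have hπB : 0 < πB := Finset.sum_pos (fun i _ => hπpos i) ⟨b₀, hb₀⟩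
  have hABsum : πA + πB = 1 := by
    rw [hπAdef, hπBdef, hBdef, Finset.sum_add_sum_compl, hπsum]
  set s : V → ℝ := st6s π with hsdef
  have hS : (st6S P π).IsHermitian := st6S_herm hπpos hrev
  set β₂ : ℝ := secondEig P with hβdef
  have hβlt : β₂ < 1 := (st6_secondEig_spec hP hirr hπpos hS hxy).1
  have hβnn : (0:ℝ) ≤ 1 - β₂ := by linarith
  set Q : Matrix V V ℝ := res P B with hQdef
  have hQrev : IsReversible Q π := st6_res_rev hrev B
  have hSB : (st6S Q π).IsHermitian := st6S_herm hπpos hQrev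
  have hQnn : ∀ x y, 0 ≤ Q x y := by
    intro x y
    rw [hQdef]
    unfold res
    split
    · exact hP.1 x y
    · exact le_refl 0
  have hQle : ∀ x y, Q x y ≤ P x y := by
    intro x y
    rw [hQdef]
    unfold res
    split
    · exact le_refl _
    · exact hP.1 x y
  have hQrow : ∀ x, ∑ y, Q x y ≤ 1 := by
    intro x
    calc ∑ y, Q x y ≤ ∑ y, P x y := Finset.sum_le_sum fun y _ => hQle x y
      _ = 1 := hP.2 x
  have hQpow0 : ∀ (m : ℕ) x y, x ∈ B → y ∉ B → (Q ^ m) x y = 0 := by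
    intro m
    cases m with
    | zero =>
        intro x y hx hy
        have : x ≠ y := fun h => hy (h ▸ hx)
        simp [Matrix.one_apply, this]
    | succ m =>
        intro x y _ hy
        rw [pow_succ, Matrix.mul_apply]
        refine Finset.sum_eq_zero fun z _ => ?_
        have : Q z y = 0 := by rw [hQdef]; unfold res; simp [hy]
        rw [this, mul_zero]
  set ν : V → ℝ := hSB.eigenvalues with hνdef
  have hν_abs : ∀ i, |ν i| ≤ 1 := by
    intro i
    obtain ⟨f, hfne, -, heig⟩ := st6_eigP_of_i hπpos hSB i
    exact st6_eig_abs_le hQnn hQrow hfne heig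
  obtain ⟨j, -, hj⟩ := Finset.exists_max_image Finset.univ ν ⟨a₀, Finset.mem_univ a₀⟩
  set lam : ℝ := ν j with hlamdef
  have hlam_ge : ∀ i, ν i ≤ lam := fun i => hj i (Finset.mem_univ i)
  have hSBnn : ∀ x y, 0 ≤ st6S Q π x y := by
    intro x y
    rw [st6S_apply]
    have := Real.sqrt_nonneg (π x)
    have := Real.sqrt_nonneg (π y)
    have := hQnn x y
    positivity
  have hSPnn : ∀ x y, 0 ≤ st6S P π x y := by
    intro x y
    rw [st6S_apply]
    have := Real.sqrt_nonneg (π x)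
    have := Real.sqrt_nonneg (π y)
    have := hP.1 x y
    positivity
  have hlam0 : 0 ≤ lam := by
    have h1 := st6_quadform1 hSB (Pi.single a₀ 1)
    have h0 := st6_quadform0 hSB (Pi.single a₀ 1)
    have hL : (Pi.single a₀ 1 : V → ℝ) ⬝ᵥ (st6S Q π *ᵥ Pi.single a₀ 1) = st6S Q π a₀ a₀ := by
      rw [Matrix.mulVec_single]
      simp [dotProduct, Pi.single_apply]
    have hL0 : (Pi.single a₀ 1 : V → ℝ) ⬝ᵥ (Pi.single a₀ 1 : V → ℝ) = 1 := by
      simp [dotProduct, Pi.single_apply]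
    have hup : st6S Q π a₀ a₀ ≤ lam := by
      rw [← hL, h1]
      calc ∑ i, ν i * (⇑(hSB.eigenvectorBasis i) ⬝ᵥ Pi.single a₀ 1) ^ 2
          ≤ ∑ i, lam * (⇑(hSB.eigenvectorBasis i) ⬝ᵥ Pi.single a₀ 1) ^ 2 :=
            Finset.sum_le_sum fun i _ => mul_le_mul_of_nonneg_right (hlam_ge i) (sq_nonneg _)
        _ = lam * ∑ i, (⇑(hSB.eigenvectorBasis i) ⬝ᵥ Pi.single a₀ 1) ^ 2 := by
            rw [Finset.mul_sum]
        _ = lam := by rw [← h0, hL0, mul_one]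
    exact le_trans (hSBnn a₀ a₀) hup
  set gB : V → ℝ := fun x => if x ∈ B then s x else 0 with hgBdef
  have hgB_dot_s : gB ⬝ᵥ s = πB := by
    unfold dotProduct
    rw [hπBdef]
    rw [Finset.sum_congr rfl (fun x _ => show gB x * s x = if x ∈ B then π x else 0 by
      simp only [hgBdef]
      split
      · exact st6s_sq hπpos x
      · ring)]
    rw [Finset.sum_ite_mem, Finset.univ_inter]
  have hgB_dot_gB : gB ⬝ᵥ gB = πB := by
    unfold dotProduct
    rw [hπBdef]
    rw [Finset.sum_congr rfl (fun x _ => show gB x * gB x = if x ∈ B then π x else 0 by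
      simp only [hgBdef]
      split
      · exact st6s_sq hπpos x
      · ring)]
    rw [Finset.sum_ite_mem, Finset.univ_inter]
  -- the key gap inequality
  have hkey : (1 - β₂) * πA ≤ 1 - lam := by
    set u : V → ℝ := fun x => if x ∈ B then ⇑(hSB.eigenvectorBasis j) x else 0 with hudef
    by_cases hu0 : u = 0
    · -- then lam = 0, use nonnegativity of the quadratic form at gB
      have hb0 : st6S Q π *ᵥ ⇑(hSB.eigenvectorBasis j) = 0 := by
        funext x
        show ∑ y, st6S Q π x y * ⇑(hSB.eigenvectorBasis j) y = 0
        refine Finset.sum_eq_zero fun y _ => ?_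
        by_cases hyB : y ∈ B
        · have hby : ⇑(hSB.eigenvectorBasis j) y = 0 := by
            have := congrFun hu0 y
            simpa [hudef, hyB] using this
          rw [hby, mul_zero]
        · by_cases hxB : x ∈ B
          · have hq : Q x y = 0 := by rw [hQdef]; unfold res; simp [hyB]
            rw [st6S_apply, hq]
            ring
          · have hq : Q x y = 0 := by rw [hQdef]; unfold res; simp [hxB]
            rw [st6S_apply, hq]
            ring
      have heig := hSB.mulVec_eigenvectorBasis j
      rw [hb0] at heig
      have hbne : ⇑(hSB.eigenvectorBasis j) ≠ 0 := by
        intro h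
        have := st6_basis_dot_self hSB j
        rw [h] at this
        simp at this
      have hlam_eq : lam = 0 := by
        rcases smul_eq_zero.1 heig.symm with h | h
        · exact h
        · exact absurd h hbne
      rw [hlam_eq, sub_zero]
      -- LEM1 : (1-β₂) πA ≤ 1
      have hb1 := st6_bound1 hP hirr hπpos hπsum hS hxy gB
      have hgBS0 : 0 ≤ gB ⬝ᵥ (st6S P π *ᵥ gB) := by
        refine Finset.sum_nonneg fun x _ => mul_nonneg ?_ ?_
        · simp only [hgBdef]
          split
          · exact Real.sqrt_nonneg _
          · exact le_refl 0
        · refine Finset.sum_nonneg fun y _ => mul_nonneg (hSPnn x y) ?_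
          simp only [hgBdef]
          split
          · exact Real.sqrt_nonneg _
          · exact le_refl 0
      rw [hgB_dot_s, hgB_dot_gB] at hb1
      have h5 : 0 ≤ (β₂ * πB + (1 - β₂) * πB ^ 2) / πB :=
        div_nonneg (le_trans hgBS0 (by nlinarith [hb1])) hπB.le
      have h6 : (β₂ * πB + (1 - β₂) * πB ^ 2) / πB = β₂ + (1 - β₂) * πB := by
        field_simp
      rw [h6] at h5
      nlinarith [h5, hABsum]
    · -- u is a nonzero eigenvector of SB supported in B
      have hQu : st6S Q π *ᵥ u = lam • u := by
        funext x
        show ∑ y, st6S Q π x y * u y = (lam • u) x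
        rw [Pi.smul_apply, smul_eq_mul]
        by_cases hxB : x ∈ B
        · have h1 : ∀ y, st6S Q π x y * u y = st6S Q π x y * ⇑(hSB.eigenvectorBasis j) y := by
            intro y
            by_cases hyB : y ∈ B
            · simp only [hudef]; simp [hyB]
            · have hq : Q x y = 0 := by rw [hQdef]; unfold res; simp [hyB]
              rw [st6S_apply, hq]
              ring
          rw [Finset.sum_congr rfl fun y _ => h1 y]
          have h2 : ∑ y, st6S Q π x y * ⇑(hSB.eigenvectorBasis j) y
              = (st6S Q π *ᵥ ⇑(hSB.eigenvectorBasis j)) x := rfl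
          rw [h2, hSB.mulVec_eigenvectorBasis j]
          rw [Pi.smul_apply, smul_eq_mul, hudef]
          simp [hxB]
          exact Or.inl rfl
        · have h1 : ∀ y, st6S Q π x y * u y = 0 := by
            intro y
            have hq : Q x y = 0 := by rw [hQdef]; unfold res; simp [hxB]
            rw [st6S_apply, hq]
            ring
          rw [Finset.sum_congr rfl fun y _ => h1 y, Finset.sum_const_zero]
          simp only [hudef]
          simp [hxB]
      have huSeq : u ⬝ᵥ (st6S P π *ᵥ u) = u ⬝ᵥ (st6S Q π *ᵥ u) := by
        unfold dotProduct
        refine Finset.sum_congr rfl fun x _ => ?_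
        by_cases hxB : x ∈ B
        · congr 1
          show (st6S P π *ᵥ u) x = (st6S Q π *ᵥ u) x
          show ∑ y, st6S P π x y * u y = ∑ y, st6S Q π x y * u y
          refine Finset.sum_congr rfl fun y _ => ?_
          by_cases hyB : y ∈ B
          · have : st6S P π x y = st6S Q π x y := by
              rw [st6S_apply, st6S_apply, hQdef]
              unfold res
              simp [hxB, hyB]
            rw [this]
          · have hu_y : u y = 0 := by simp only [hudef]; simp [hyB]
            rw [hu_y, mul_zero, mul_zero]
        · have hu_x : u x = 0 := by simp only [hudef]; simp [hxB]
          rw [hu_x, zero_mul, zero_mul]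
      have huSB : u ⬝ᵥ (st6S Q π *ᵥ u) = lam * (u ⬝ᵥ u) := by
        rw [hQu, dotProduct_smul, smul_eq_mul]
      have hdots : u ⬝ᵥ s = ∑ x ∈ B, u x * s x := by
        unfold dotProduct
        rw [Finset.sum_congr rfl (fun x _ => show u x * s x = if x ∈ B then u x * s x else 0 by
          simp only [hudef]
          by_cases hxB : x ∈ B <;> simp [hxB])]
        rw [Finset.sum_ite_mem, Finset.univ_inter]
      have hCS : (u ⬝ᵥ s) ^ 2 ≤ πB * (u ⬝ᵥ u) := by
        rw [hdots]
        have h2 := Finset.sum_mul_sq_le_sq_mul_sq B (fun x => u x) (fun x => s x)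
        have h3 : ∑ x ∈ B, s x ^ 2 = πB := by
          rw [hπBdef]
          exact Finset.sum_congr rfl fun x _ => by rw [sq]; exact st6s_sq hπpos x
        have h4 : ∑ x ∈ B, u x ^ 2 ≤ u ⬝ᵥ u := by
          unfold dotProduct
          rw [Finset.sum_congr rfl (fun x (_ : x ∈ B) => sq (u x))]
          exact Finset.sum_le_sum_of_subset_of_nonneg (Finset.subset_univ B)
            (fun x _ _ => mul_self_nonneg (u x))
        calc (∑ x ∈ B, u x * s x) ^ 2 ≤ (∑ x ∈ B, u x ^ 2) * ∑ x ∈ B, s x ^ 2 := h2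
          _ = (∑ x ∈ B, u x ^ 2) * πB := by rw [h3]
          _ ≤ (u ⬝ᵥ u) * πB := mul_le_mul_of_nonneg_right h4 hπB.le
          _ = πB * (u ⬝ᵥ u) := mul_comm _ _
      have huu : 0 < u ⬝ᵥ u := by
        have h0 : 0 ≤ u ⬝ᵥ u := Finset.sum_nonneg fun x _ => mul_self_nonneg (u x)
        rcases h0.lt_or_eq with h | h
        · exact h
        · exact absurd (dotProduct_self_eq_zero.1 h.symm) hu0
      have hb1 := st6_bound1 hP hirr hπpos hπsum hS hxy u
      have hCS' : (1 - β₂) * (u ⬝ᵥ s) ^ 2 ≤ (1 - β₂) * (πB * (u ⬝ᵥ u)) :=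
        mul_le_mul_of_nonneg_left hCS hβnn
      have hmain : lam * (u ⬝ᵥ u) ≤ (β₂ + (1 - β₂) * πB) * (u ⬝ᵥ u) := by
        rw [← huSB, ← huSeq]
        nlinarith [hb1, hCS']
      have hfac : lam ≤ β₂ + (1 - β₂) * πB := le_of_mul_le_mul_right
        (by linarith [hmain]) huu
      nlinarith [hfac, hABsum]
  have hlam1 : lam < 1 := by nlinarith [hkey, mul_pos (by linarith : (0:ℝ) < 1 - β₂) hπA]
  -- survival probability formula
  have hsurv : ∀ m, survGT P (condOn π B) B m
      = (∑ i, ν i ^ m * (⇑(hSB.eigenvectorBasis i) ⬝ᵥ gB) ^ 2) / πB := by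
    intro m
    have hdd : gB ⬝ᵥ ((st6S Q π) ^ m *ᵥ gB) = πB * survGT P (condOn π B) B m := by
      rw [st6S_pow hπpos m]
      unfold survGT
      rw [← hQdef]
      show ∑ x, gB x * ∑ y, st6S (Q ^ m) π x y * gB y
        = πB * ∑ x, ∑ y, condOn π B x * (Q ^ m) x y
      rw [Finset.mul_sum]
      refine Finset.sum_congr rfl fun x _ => ?_
      by_cases hxB : x ∈ B
      · have hgx : gB x = s x := by simp only [hgBdef]; simp [hxB]
        have hterm : ∀ y, st6S (Q ^ m) π x y * gB y = s x * (Q ^ m) x y := by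
          intro y
          by_cases hyB : y ∈ B
          · rw [st6S_apply]
            have hgy : gB y = s y := by simp only [hgBdef]; simp [hyB]
            rw [hgy]
            have hne : s y ≠ 0 := (st6s_pos hπpos y).ne'
            simp only [hsdef] at hne ⊢
            field_simp
          · have hq : (Q ^ m) x y = 0 := hQpow0 m x y hxB hyB
            have hgy : gB y = 0 := by simp only [hgBdef]; simp [hyB]
            rw [hq, hgy, mul_zero, mul_zero]
        rw [hgx, Finset.sum_congr rfl fun y _ => hterm y, ← Finset.mul_sum]
        have hcond : ∀ y, condOn π B x * (Q ^ m) x y = (π x / πB) * (Q ^ m) x y := by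
          intro y
          unfold condOn
          rw [if_pos hxB, ← hπBdef]
        rw [Finset.sum_congr rfl fun y _ => hcond y, ← Finset.mul_sum]
        have hsq := st6s_sq hπpos x
        field_simp
        ring_nf
        nlinarith [hsq, Finset.sum_nonneg (fun y (_ : y ∈ Finset.univ) =>
          st6_pow_nonneg hQnn m x y)]
      · have hgx : gB x = 0 := by simp only [hgBdef]; simp [hxB]
        have hcond : condOn π B x = 0 := by unfold condOn; rw [if_neg hxB]
        rw [hgx, zero_mul]
        rw [Finset.sum_congr rfl fun y _ => by rw [hcond, zero_mul]]
        rw [Finset.sum_const_zero, mul_zero]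
    have hqf := st6_quadform hSB m gB
    rw [hdd] at hqf
    rw [← hνdef] at hqf
    rw [eq_div_iff hπB.ne']
    linarith [hqf]
  have hCsum : ∑ i, (⇑(hSB.eigenvectorBasis i) ⬝ᵥ gB) ^ 2 = πB := by
    rw [← st6_quadform0 hSB gB, hgB_dot_gB]
  -- partial sums
  have hpart : ∀ n, ∑ m ∈ Finset.range n, survGT P (condOn π B) B m ≤ (1 - lam)⁻¹ := by
    intro n
    rw [Finset.sum_congr rfl fun m _ => hsurv m, ← Finset.sum_div]
    have hsw : ∑ m ∈ Finset.range n, ∑ i, ν i ^ m * (⇑(hSB.eigenvectorBasis i) ⬝ᵥ gB) ^ 2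
        = ∑ i, (⇑(hSB.eigenvectorBasis i) ⬝ᵥ gB) ^ 2 * ∑ m ∈ Finset.range n, ν i ^ m := by
      rw [Finset.sum_comm]
      refine Finset.sum_congr rfl fun i _ => ?_
      rw [Finset.mul_sum]
      exact Finset.sum_congr rfl fun m _ => by ring
    rw [hsw]
    have hbound : ∑ i, (⇑(hSB.eigenvectorBasis i) ⬝ᵥ gB) ^ 2 * ∑ m ∈ Finset.range n, ν i ^ m
        ≤ πB * (1 - lam)⁻¹ := by
      calc ∑ i, (⇑(hSB.eigenvectorBasis i) ⬝ᵥ gB) ^ 2 * ∑ m ∈ Finset.range n, ν i ^ m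
          ≤ ∑ i, (⇑(hSB.eigenvectorBasis i) ⬝ᵥ gB) ^ 2 * (1 - lam)⁻¹ :=
            Finset.sum_le_sum fun i _ => mul_le_mul_of_nonneg_left
              (st6_geo (abs_le.1 (hν_abs i)).1 (hlam_ge i) hlam0 hlam1 n) (sq_nonneg _)
        _ = (∑ i, (⇑(hSB.eigenvectorBasis i) ⬝ᵥ gB) ^ 2) * (1 - lam)⁻¹ := by
            rw [Finset.sum_mul]
        _ = πB * (1 - lam)⁻¹ := by rw [hCsum]
    rw [div_le_iff₀ hπB]
    calc ∑ i, (⇑(hSB.eigenvectorBasis i) ⬝ᵥ gB) ^ 2 * ∑ m ∈ Finset.range n, ν i ^ m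
        ≤ πB * (1 - lam)⁻¹ := hbound
      _ = (1 - lam)⁻¹ * πB := mul_comm _ _
  have hnn : ∀ m, 0 ≤ survGT P (condOn π B) B m := by
    intro m
    unfold survGT
    refine Finset.sum_nonneg fun x _ => Finset.sum_nonneg fun y _ => mul_nonneg ?_ ?_
    · unfold condOn
      split
      · exact div_nonneg (hπpos x).le (Finset.sum_nonneg fun b _ => (hπpos b).le)
      · exact le_refl 0
    · refine st6_pow_nonneg ?_ m x y
      intro x' y'
      unfold res
      split
      · exact hP.1 x' y'
      · exact le_refl 0
  have hexp : expExit P (condOn π B) B ≤ (1 - lam)⁻¹ :=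
    Real.tsum_le_of_sum_range_le hnn hpart
  have hprod_pos : 0 < (1 - β₂) * πA := mul_pos (by linarith) hπA
  have hfinal : expExit P (condOn π B) B ≤ (1 - β₂)⁻¹ / πA := by
    have h1 : (1 - β₂)⁻¹ / πA = ((1 - β₂) * πA)⁻¹ := by
      rw [div_eq_mul_inv, mul_inv]
    rw [h1]
    exact le_trans hexp (inv_anti₀ hprod_pos hkey)
  refine ⟨hfinal, fun hhalf => ?_⟩
  have h2 : (1 - β₂)⁻¹ / πA ≤ 2 * (1 - β₂)⁻¹ := by
    rw [div_eq_mul_inv, mul_comm]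
    have hβinv : (0:ℝ) ≤ (1 - β₂)⁻¹ := inv_nonneg.2 (by linarith)
    have hπAinv : πA⁻¹ ≤ 2 := by
      have := inv_anti₀ (by norm_num : (0:ℝ) < 1/2) hhalf
      simpa using this
    exact mul_le_mul_of_nonneg_right hπAinv hβinv
  exact le_trans hfinal h2
end

section
/- Let P be an irreducible reversible transition matrix on finite V with stationary distribution π, B ⊊ V nonempty, α^B its quasi-stationary distribution, and f := α^B/π_B. Then there exists a level L > 0 such that, with π_L denoting π conditioned on the superlevel set B_L := {b : f(b) ≥ L}, one has E_{π_L}[f] > (20/17)·L and E_{π_L}[f²] = 2L·E_{π_L}[f] ≤ 4L². -/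
open Finset Matrix

namespace Stmt8Aux

variable {V : Type*} [Fintype V] [DecidableEq V]

/-- Tail second moment. -/
noncomputable def Aq (π f : V → ℝ) (B : Finset V) (t : ℝ) : ℝ :=
  ∑ x ∈ B.filter (fun x => t ≤ f x), π x * f x ^ 2

/-- Tail first moment. -/
noncomputable def Cq (π f : V → ℝ) (B : Finset V) (t : ℝ) : ℝ :=
  ∑ x ∈ B.filter (fun x => t ≤ f x), π x * f x

lemma stepA (π f : V → ℝ) (T : Finset V) {a b : ℝ} (ha : 0 < a) (hab : a ≤ b)
    (hπf : ∀ x ∈ T, 0 ≤ π x * f x)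
    (hAC : ∑ x ∈ T, π x * f x ^ 2 ≤ 2 * a * ∑ x ∈ T, π x * f x) :
    ∑ x ∈ T, π x * (4 * f x / b - f x ^ 2 / b ^ 2 - 3)
      ≤ ∑ x ∈ T, π x * (4 * f x / a - f x ^ 2 / a ^ 2 - 3) := by
  have hb : 0 < b := lt_of_lt_of_le ha hab
  have hC0 : 0 ≤ ∑ x ∈ T, π x * f x := Finset.sum_nonneg hπf
  rw [← sub_nonneg, ← Finset.sum_sub_distrib]
  have hcongr : ∀ x ∈ T,
      π x * (4 * f x / a - f x ^ 2 / a ^ 2 - 3) - π x * (4 * f x / b - f x ^ 2 / b ^ 2 - 3)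
      = (4 / a - 4 / b) * (π x * f x) - (1 / a ^ 2 - 1 / b ^ 2) * (π x * f x ^ 2) := by
    intro x _
    field_simp
    ring
  rw [Finset.sum_congr rfl hcongr, Finset.sum_sub_distrib, ← Finset.mul_sum, ← Finset.mul_sum]
  set C := ∑ x ∈ T, π x * f x with hC
  set A := ∑ x ∈ T, π x * f x ^ 2 with hA
  have hid : (4 / a - 4 / b) * C - (1 / a ^ 2 - 1 / b ^ 2) * A
      = (2 * a * C - A) * (1 / a ^ 2 - 1 / b ^ 2) + 2 * C * (b - a) ^ 2 / (a * b ^ 2) := by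
    field_simp
    ring
  rw [hid]
  have h1 : 0 ≤ 1 / a ^ 2 - 1 / b ^ 2 := by
    have h2 : (1:ℝ) / b ^ 2 ≤ 1 / a ^ 2 :=
      one_div_le_one_div_of_le (by positivity) (pow_le_pow_left₀ ha.le hab 2)
    linarith
  refine add_nonneg (mul_nonneg (by linarith) h1) ?_
  apply div_nonneg ?_ (by positivity)
  nlinarith [sq_nonneg (b - a)]

lemma mainInd (π f : V → ℝ) (B : Finset V) (L : ℝ) (hL : 0 < L)
    (hπ : ∀ x ∈ B, 0 < π x) (hf : ∀ x ∈ B, 0 ≤ f x)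
    (hkey : ∀ a b : ℝ, L ≤ a → a ≤ b → (∀ x ∈ B, a < f x → b ≤ f x) →
      Aq π f B b ≤ 2 * a * Cq π f B b) :
    ∀ n : ℕ, ∀ t : ℝ, L ≤ t → (B.filter (fun x => t ≤ f x)).card ≤ n →
      0 ≤ ∑ x ∈ B.filter (fun x => t ≤ f x), π x * (4 * f x / t - f x ^ 2 / t ^ 2 - 3) := by
  intro n
  induction n with
  | zero =>
    intro t ht hcard
    have he : B.filter (fun x => t ≤ f x) = ∅ := Finset.card_eq_zero.mp (Nat.le_zero.mp hcard)
    rw [he]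
    simp
  | succ n ih =>
    intro t ht hcard
    set T := B.filter (fun x => t ≤ f x) with hT
    by_cases hTe : T = ∅
    · rw [hTe]; simp
    have hTne : T.Nonempty := Finset.nonempty_iff_ne_empty.mpr hTe
    have himne : (T.image f).Nonempty := hTne.image f
    set w := (T.image f).min' himne with hwdef
    obtain ⟨xw, hxwT, hxw0⟩ := Finset.mem_image.mp (Finset.min'_mem _ himne)
    have hxw : f xw = w := by rw [hwdef]; exact hxw0
    have hwle : ∀ x ∈ T, w ≤ f x := fun x hx => Finset.min'_le _ _ (Finset.mem_image_of_mem f hx)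
    have htw : t ≤ w := by rw [← hxw]; exact (Finset.mem_filter.mp hxwT).2
    have ht0 : 0 < t := lt_of_lt_of_le hL ht
    have hw0 : 0 < w := lt_of_lt_of_le ht0 htw
    have hTw : T = B.filter (fun x => w ≤ f x) := by
      ext x
      simp only [hT, Finset.mem_filter]
      constructor
      · rintro ⟨h1, h2⟩
        exact ⟨h1, hwle x (by rw [hT]; exact Finset.mem_filter.mpr ⟨h1, h2⟩)⟩
      · rintro ⟨h1, h2⟩
        exact ⟨h1, le_trans htw h2⟩
    have hACt : ∑ x ∈ T, π x * f x ^ 2 ≤ 2 * t * ∑ x ∈ T, π x * f x := by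
      have := hkey t w ht htw (by
        intro x hx hfx
        exact hwle x (by rw [hT]; exact Finset.mem_filter.mpr ⟨hx, le_of_lt hfx⟩))
      unfold Aq Cq at this
      rw [hTw]
      exact this
    have hπf : ∀ x ∈ T, 0 ≤ π x * f x := by
      intro x hx
      have hxB : x ∈ B := (Finset.mem_filter.mp (by rw [← hT]; exact hx)).1
      exact mul_nonneg (le_of_lt (hπ x hxB)) (hf x hxB)
    have step1 := stepA π f T ht0 htw hπf hACt
    refine le_trans ?_ step1
    rw [← Finset.sum_filter_add_sum_filter_not T (fun x => w < f x)]
    have hzero : ∑ x ∈ T.filter (fun x => ¬ w < f x), π x * (4 * f x / w - f x ^ 2 / w ^ 2 - 3) = 0 := by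
      apply Finset.sum_eq_zero
      intro x hx
      have hfx : f x = w :=
        le_antisymm (not_lt.mp (Finset.mem_filter.mp hx).2)
          (hwle x (Finset.mem_filter.mp hx).1)
      have hcoef : 4 * w / w - w ^ 2 / w ^ 2 - 3 = 0 := by
        rw [mul_div_assoc, div_self (ne_of_gt hw0), div_self (pow_ne_zero 2 (ne_of_gt hw0))]
        ring
      rw [hfx, hcoef, mul_zero]
    rw [hzero, add_zero]
    set T2 := T.filter (fun x => w < f x) with hT2
    by_cases hT2e : T2 = ∅
    · rw [hT2e]; simp
    have hT2ne : T2.Nonempty := Finset.nonempty_iff_ne_empty.mpr hT2e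
    have him2ne : (T2.image f).Nonempty := hT2ne.image f
    set w' := (T2.image f).min' him2ne with hw'def
    obtain ⟨xw', hxw'T, hxw'0⟩ := Finset.mem_image.mp (Finset.min'_mem _ him2ne)
    have hxw' : f xw' = w' := by rw [hw'def]; exact hxw'0
    have hw'le : ∀ x ∈ T2, w' ≤ f x := fun x hx => Finset.min'_le _ _ (Finset.mem_image_of_mem f hx)
    have hww' : w < w' := by rw [← hxw']; exact (Finset.mem_filter.mp hxw'T).2
    have hT2B : ∀ x ∈ T2, x ∈ B := by
      intro x hx
      exact (Finset.mem_filter.mp (Finset.mem_filter.mp hx).1).1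
    have hT2w' : T2 = B.filter (fun x => w' ≤ f x) := by
      ext x
      constructor
      · intro hx
        exact Finset.mem_filter.mpr ⟨hT2B x hx, hw'le x hx⟩
      · intro hx
        have hxB := (Finset.mem_filter.mp hx).1
        have hxf : w' ≤ f x := (Finset.mem_filter.mp hx).2
        have hwf : w < f x := lt_of_lt_of_le hww' hxf
        refine Finset.mem_filter.mpr ⟨?_, hwf⟩
        rw [hT]
        exact Finset.mem_filter.mpr ⟨hxB, le_trans (le_trans htw (le_of_lt hww')) hxf⟩
    have hmemT2 : ∀ x ∈ B, w < f x → x ∈ T2 := by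
      intro x hx hwx
      rw [hT2]
      refine Finset.mem_filter.mpr ⟨?_, hwx⟩
      rw [hT]
      exact Finset.mem_filter.mpr ⟨hx, le_trans htw (le_of_lt hwx)⟩
    have hkey2 : ∑ x ∈ T2, π x * f x ^ 2 ≤ 2 * w * ∑ x ∈ T2, π x * f x := by
      have := hkey w w' (le_trans ht htw) (le_of_lt hww') (by
        intro x hx hwx
        exact hw'le x (hmemT2 x hx hwx))
      unfold Aq Cq at this
      rw [hT2w']
      exact this
    have hπf2 : ∀ x ∈ T2, 0 ≤ π x * f x := fun x hx => hπf x (Finset.filter_subset _ _ hx)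
    have step2 := stepA π f T2 hw0 (le_of_lt hww') hπf2 hkey2
    refine le_trans ?_ step2
    have hcard2 : (B.filter (fun x => w' ≤ f x)).card ≤ n := by
      rw [← hT2w']
      have hssub : T2 ⊂ T := by
        refine ⟨Finset.filter_subset _ _, ?_⟩
        intro hcon
        have := (Finset.mem_filter.mp (hcon hxwT)).2
        rw [hxw] at this
        exact lt_irrefl w this
      have := Finset.card_lt_card hssub
      omega
    have hrec := ih w' (le_trans ht (le_trans htw (le_of_lt hww'))) hcard2
    rw [← hT2w'] at hrec
    exact hrec

end Stmt8Aux

set_option maxHeartbeats 1000000 in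
/-- Lemma on a good superlevel set: with `f := α^B/π_B`, there is a
level `L > 0` such that, for `π_L` denoting `π` conditioned on `B_L = {f ≥ L}`,
`E_{π_L}[f] > (20/17)·L` and `E_{π_L}[f²] = 2L·E_{π_L}[f] ≤ 4L²`. -/
theorem stmt_8 {V : Type*} [Fintype V] [DecidableEq V]
    (P : Matrix V V ℝ) (π : V → ℝ)
    (hP : IsStochastic P) (hirr : IsIrreducibleMat P)
    (hπpos : ∀ x, 0 < π x) (hπsum : ∑ x, π x = 1)
    (hrev : IsReversible P π)
    (B : Finset V) (hBne : B.Nonempty) (hBproper : B ≠ Finset.univ)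
    (α : V → ℝ) (hα0 : ∀ x, 0 ≤ α x) (hαsupp : ∀ x ∉ B, α x = 0)
    (hαsum : ∑ x, α x = 1)
    (hqs : α ᵥ* res P B = topEig P B • α)
    (f : V → ℝ) (hfdef : ∀ x, f x = α x / condOn π B x) :
    ∃ L : ℝ, 0 < L ∧
      (20 / 17) * L < ∑ x, condOn π (B.filter (fun b => L ≤ f b)) x * f x ∧
      (∑ x, condOn π (B.filter (fun b => L ≤ f b)) x * f x ^ 2
        = 2 * L * ∑ x, condOn π (B.filter (fun b => L ≤ f b)) x * f x) ∧
      (∑ x, condOn π (B.filter (fun b => L ≤ f b)) x * f x ^ 2 ≤ 4 * L ^ 2) := by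
  classical
  have hπB : 0 < ∑ b ∈ B, π b := Finset.sum_pos (fun b _ => hπpos b) hBne
  have hcond : ∀ b ∈ B, condOn π B b = π b / ∑ c ∈ B, π c := by
    intro b hb; unfold condOn; rw [if_pos hb]
  have hfnn : ∀ b ∈ B, 0 ≤ f b := by
    intro b hb
    rw [hfdef b]
    apply div_nonneg (hα0 b)
    rw [hcond b hb]
    exact div_nonneg (hπpos b).le (Finset.sum_nonneg fun c _ => (hπpos c).le)
  have hex : ∃ b ∈ B, 0 < f b := by
    by_contra hcon
    push_neg at hcon
    have hall : ∀ x, α x = 0 := by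
      intro x
      by_cases hx : x ∈ B
      · by_contra hax
        have hαx : 0 < α x := lt_of_le_of_ne (hα0 x) (Ne.symm hax)
        have hdpos : 0 < condOn π B x := by
          rw [hcond x hx]; exact div_pos (hπpos x) hπB
        have hfx : 0 < f x := by rw [hfdef x]; exact div_pos hαx hdpos
        exact absurd hfx (not_lt.mpr (hcon x hx))
      · exact hαsupp x hx
    rw [Finset.sum_congr rfl fun x _ => hall x] at hαsum
    simp at hαsum
  obtain ⟨b0, hb0B, hb0f⟩ := hex
  set vals := B.image f with hvalsdef
  have hCnn : ∀ t : ℝ, 0 ≤ Stmt8Aux.Cq π f B t := by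
    intro t
    apply Finset.sum_nonneg
    intro x hx
    exact mul_nonneg (hπpos x).le (hfnn x (Finset.mem_filter.mp hx).1)
  have hAnn : ∀ t : ℝ, 0 ≤ Stmt8Aux.Aq π f B t := by
    intro t
    apply Finset.sum_nonneg
    intro x hx
    exact mul_nonneg (hπpos x).le (sq_nonneg _)
  have hCwit : ∀ v : ℝ, 0 < v → v ∈ vals → 0 < Stmt8Aux.Cq π f B v := by
    intro v hv hvm
    obtain ⟨b, hbB, hbf⟩ := Finset.mem_image.mp hvm
    apply Finset.sum_pos'
    · intro x hx
      exact mul_nonneg (hπpos x).le (hfnn x (Finset.mem_filter.mp hx).1)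
    · refine ⟨b, Finset.mem_filter.mpr ⟨hbB, le_of_eq hbf.symm⟩, ?_⟩
      rw [hbf]; exact mul_pos (hπpos b) hv
  have hAwit : ∀ v : ℝ, 0 < v → v ∈ vals → 0 < Stmt8Aux.Aq π f B v := by
    intro v hv hvm
    obtain ⟨b, hbB, hbf⟩ := Finset.mem_image.mp hvm
    apply Finset.sum_pos'
    · intro x hx
      exact mul_nonneg (hπpos x).le (sq_nonneg _)
    · refine ⟨b, Finset.mem_filter.mpr ⟨hbB, le_of_eq hbf.symm⟩, ?_⟩
      rw [hbf]; exact mul_pos (hπpos b) (pow_pos hv 2)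
  set GoodP : ℝ → Prop := fun v => 0 < v ∧ 0 < Stmt8Aux.Aq π f B v ∧
      ∀ u ∈ vals, u < v → 2 * u * Stmt8Aux.Cq π f B v < Stmt8Aux.Aq π f B v with hGoodP
  set Goods := vals.filter GoodP with hGoodsdef
  have hGne : Goods.Nonempty := by
    set pos := vals.filter (fun v => 0 < v) with hposdef
    have hposne : pos.Nonempty :=
      ⟨f b0, Finset.mem_filter.mpr ⟨Finset.mem_image_of_mem f hb0B, hb0f⟩⟩
    set w1 := pos.min' hposne with hw1def
    have hw1m := Finset.min'_mem pos hposne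
    have hw1v : w1 ∈ vals := (Finset.mem_filter.mp hw1m).1
    have hw10 : 0 < w1 := (Finset.mem_filter.mp hw1m).2
    have hGw1 : GoodP w1 := by
      simp only [hGoodP]
      refine ⟨hw10, hAwit w1 hw10 hw1v, ?_⟩
      intro u hu hulw
      have hu0 : u ≤ 0 := by
        by_contra hc
        push_neg at hc
        have humem : u ∈ pos := Finset.mem_filter.mpr ⟨hu, hc⟩
        have := Finset.min'_le pos u humem
        rw [← hw1def] at this
        linarith
      nlinarith [mul_nonneg (neg_nonneg.mpr hu0) (hCnn w1), hAwit w1 hw10 hw1v]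
    exact ⟨w1, Finset.mem_filter.mpr ⟨hw1v, hGw1⟩⟩
  set vs := Goods.max' hGne with hvsdef
  have hvsm := Goods.max'_mem hGne
  have hvsval : vs ∈ vals := (Finset.mem_filter.mp hvsm).1
  have hvsG : GoodP vs := (Finset.mem_filter.mp hvsm).2
  simp only [hGoodP] at hvsG
  obtain ⟨hvs0, hAvs, hvslt⟩ := hvsG
  have hCvs : 0 < Stmt8Aux.Cq π f B vs := hCwit vs hvs0 hvsval
  set L := Stmt8Aux.Aq π f B vs / (2 * Stmt8Aux.Cq π f B vs) with hLdef
  have hL : 0 < L := div_pos hAvs (by linarith)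
  have hAeq : Stmt8Aux.Aq π f B vs = 2 * L * Stmt8Aux.Cq π f B vs := by
    rw [hLdef]
    field_simp [ne_of_gt hCvs]
  -- non-goodness of values above vs
  have hng : ∀ v, v ∈ vals → vs < v →
      Stmt8Aux.Aq π f B v ≤ 0 ∨
      ∃ u, u ∈ vals ∧ u < v ∧ Stmt8Aux.Aq π f B v ≤ 2 * u * Stmt8Aux.Cq π f B v := by
    intro v hv hlt
    have hnG : ¬ GoodP v := by
      intro hg
      have := Finset.le_max' Goods v (Finset.mem_filter.mpr ⟨hv, hg⟩)
      rw [← hvsdef] at this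
      exact absurd this (not_le.mpr hlt)
    simp only [hGoodP] at hnG
    push_neg at hnG
    by_cases hA : 0 < Stmt8Aux.Aq π f B v
    · obtain ⟨u, hu1, hu2, hu3⟩ := hnG (lt_trans hvs0 hlt) hA
      exact Or.inr ⟨u, hu1, hu2, hu3⟩
    · exact Or.inl (not_lt.mp hA)
  -- L ≤ vs
  have hLvs : L ≤ vs := by
    set up := vals.filter (fun u => vs < u) with hupdef
    by_cases hupe : up = ∅
    · have hflat : ∀ x ∈ B.filter (fun x => vs ≤ f x), f x = vs := by
        intro x hx
        obtain ⟨hxB, hxf⟩ := Finset.mem_filter.mp hx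
        refine le_antisymm ?_ hxf
        by_contra hlt
        push_neg at hlt
        have hmem : f x ∈ up := Finset.mem_filter.mpr ⟨Finset.mem_image_of_mem f hxB, hlt⟩
        rw [hupe] at hmem
        exact absurd hmem (Finset.notMem_empty _)
      have hAv : Stmt8Aux.Aq π f B vs = vs * Stmt8Aux.Cq π f B vs := by
        unfold Stmt8Aux.Aq Stmt8Aux.Cq
        rw [Finset.mul_sum]
        apply Finset.sum_congr rfl
        intro x hx
        rw [hflat x hx]; ring
      have hAeq2 := hAeq
      rw [hAv] at hAeq2
      have h2 : vs = 2 * L := mul_right_cancel₀ (ne_of_gt hCvs) hAeq2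
      linarith
    · have hupne : up.Nonempty := Finset.nonempty_iff_ne_empty.mpr hupe
      set v' := up.min' hupne with hv'def
      have hv'm := Finset.min'_mem up hupne
      have hv'val : v' ∈ vals := (Finset.mem_filter.mp hv'm).1
      have hvsv' : vs < v' := (Finset.mem_filter.mp hv'm).2
      have hv'0 : 0 < v' := lt_trans hvs0 hvsv'
      have hCv' : 0 < Stmt8Aux.Cq π f B v' := hCwit v' hv'0 hv'val
      have hA'le : Stmt8Aux.Aq π f B v' ≤ 2 * vs * Stmt8Aux.Cq π f B v' := by
        rcases hng v' hv'val hvsv' with h | ⟨u, huv, hulv, hle⟩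
        · nlinarith [hCnn v']
        · have huvs : u ≤ vs := by
            by_contra hc
            push_neg at hc
            have humem : u ∈ up := Finset.mem_filter.mpr ⟨huv, hc⟩
            have := Finset.min'_le up u humem
            rw [← hv'def] at this
            linarith
          nlinarith [mul_nonneg (sub_nonneg.mpr huvs) (hCnn v')]
      have hsub : B.filter (fun x => v' ≤ f x) ⊆ B.filter (fun x => vs ≤ f x) := by
        intro x hx
        obtain ⟨h1, h2⟩ := Finset.mem_filter.mp hx
        exact Finset.mem_filter.mpr ⟨h1, le_trans (le_of_lt hvsv') h2⟩
      have hD : ∀ x ∈ (B.filter (fun x => vs ≤ f x)) \ (B.filter (fun x => v' ≤ f x)), f x = vs := by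
        intro x hx
        obtain ⟨hx1, hx2⟩ := Finset.mem_sdiff.mp hx
        obtain ⟨hxB, hxf⟩ := Finset.mem_filter.mp hx1
        refine le_antisymm ?_ hxf
        by_contra hlt
        push_neg at hlt
        have hfv : f x ∈ up := Finset.mem_filter.mpr ⟨Finset.mem_image_of_mem f hxB, hlt⟩
        have hge := Finset.min'_le up _ hfv
        rw [← hv'def] at hge
        exact hx2 (Finset.mem_filter.mpr ⟨hxB, hge⟩)
      set PD := ∑ x ∈ (B.filter (fun x => vs ≤ f x)) \ (B.filter (fun x => v' ≤ f x)), π x with hPDdef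
      have hPD0 : 0 ≤ PD := Finset.sum_nonneg fun x _ => (hπpos x).le
      have e1 : ∑ x ∈ (B.filter (fun x => vs ≤ f x)) \ (B.filter (fun x => v' ≤ f x)), π x * f x ^ 2
          = vs ^ 2 * PD := by
        rw [hPDdef, Finset.mul_sum]
        apply Finset.sum_congr rfl
        intro x hx
        rw [hD x hx]; ring
      have e2 : ∑ x ∈ (B.filter (fun x => vs ≤ f x)) \ (B.filter (fun x => v' ≤ f x)), π x * f x
          = vs * PD := by
        rw [hPDdef, Finset.mul_sum]
        apply Finset.sum_congr rfl
        intro x hx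
        rw [hD x hx]; ring
      have hAsplit : Stmt8Aux.Aq π f B vs = Stmt8Aux.Aq π f B v' + vs ^ 2 * PD := by
        unfold Stmt8Aux.Aq
        rw [← Finset.sum_sdiff hsub, e1]
        ring
      have hCsplit : Stmt8Aux.Cq π f B vs = Stmt8Aux.Cq π f B v' + vs * PD := by
        unfold Stmt8Aux.Cq
        rw [← Finset.sum_sdiff hsub, e2]
        ring
      have hvC : vs * Stmt8Aux.Cq π f B v' ≤ Stmt8Aux.Aq π f B v' := by
        unfold Stmt8Aux.Aq Stmt8Aux.Cq
        rw [Finset.mul_sum]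
        apply Finset.sum_le_sum
        intro x hx
        obtain ⟨hxB, hxf⟩ := Finset.mem_filter.mp hx
        have hvsf : vs ≤ f x := le_trans (le_of_lt hvsv') hxf
        nlinarith [mul_nonneg (hπpos x).le (hfnn x hxB)]
      by_contra hcon
      push_neg at hcon
      have hsum : Stmt8Aux.Aq π f B v' + vs ^ 2 * PD
          = 2 * L * Stmt8Aux.Cq π f B v' + 2 * L * (vs * PD) := by
        rw [← hAsplit, hAeq, hCsplit]
        ring
      nlinarith [mul_pos (sub_pos.mpr hcon) hCv',
        mul_nonneg hPD0 (mul_nonneg hvs0.le (sub_pos.mpr hcon).le),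
        mul_nonneg hPD0 (mul_nonneg hvs0.le hvs0.le)]
  -- the superlevel set of L is that of vs
  have hSL : B.filter (fun b => L ≤ f b) = B.filter (fun x => vs ≤ f x) := by
    ext x
    simp only [Finset.mem_filter]
    constructor
    · rintro ⟨h1, h2⟩
      refine ⟨h1, ?_⟩
      by_contra hclt
      push_neg at hclt
      have hlt2 := hvslt (f x) (Finset.mem_image_of_mem f h1) hclt
      nlinarith [mul_nonneg (sub_nonneg.mpr h2) hCvs.le]
    · rintro ⟨h1, h2⟩
      exact ⟨h1, le_trans hLvs h2⟩
  -- the key tail inequality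
  have hkey : ∀ a b : ℝ, L ≤ a → a ≤ b → (∀ x ∈ B, a < f x → b ≤ f x) →
      Stmt8Aux.Aq π f B b ≤ 2 * a * Stmt8Aux.Cq π f B b := by
    intro a b hLa hab himp
    have ha0 : 0 < a := lt_of_lt_of_le hL hLa
    by_cases hTe : B.filter (fun x => b ≤ f x) = ∅
    · unfold Stmt8Aux.Aq Stmt8Aux.Cq
      rw [hTe]
      simp
    have hTne : (B.filter (fun x => b ≤ f x)).Nonempty := Finset.nonempty_iff_ne_empty.mpr hTe
    have himne := hTne.image f
    set w0 := ((B.filter (fun x => b ≤ f x)).image f).min' himne with hw0def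
    obtain ⟨x0, hx0T, hx00⟩ := Finset.mem_image.mp (Finset.min'_mem _ himne)
    have hx0 : f x0 = w0 := by rw [hw0def]; exact hx00
    have hw0le : ∀ x ∈ B.filter (fun x => b ≤ f x), w0 ≤ f x :=
      fun x hx => Finset.min'_le _ _ (Finset.mem_image_of_mem f hx)
    have hbw0 : b ≤ w0 := by rw [← hx0]; exact (Finset.mem_filter.mp hx0T).2
    have hw0val : w0 ∈ vals := by
      rw [← hx0]; exact Finset.mem_image_of_mem f (Finset.mem_filter.mp hx0T).1
    have hTw0 : B.filter (fun x => b ≤ f x) = B.filter (fun x => w0 ≤ f x) := by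
      ext x
      simp only [Finset.mem_filter]
      constructor
      · rintro ⟨h1, h2⟩
        exact ⟨h1, hw0le x (Finset.mem_filter.mpr ⟨h1, h2⟩)⟩
      · rintro ⟨h1, h2⟩
        exact ⟨h1, le_trans hbw0 h2⟩
    have hAbw : Stmt8Aux.Aq π f B b = Stmt8Aux.Aq π f B w0 := by
      unfold Stmt8Aux.Aq; rw [hTw0]
    have hCbw : Stmt8Aux.Cq π f B b = Stmt8Aux.Cq π f B w0 := by
      unfold Stmt8Aux.Cq; rw [hTw0]
    by_cases hcw : w0 ≤ vs
    · have hTS : B.filter (fun x => w0 ≤ f x) = B.filter (fun x => vs ≤ f x) := by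
        ext x
        simp only [Finset.mem_filter]
        constructor
        · rintro ⟨h1, h2⟩
          refine ⟨h1, ?_⟩
          by_contra hclt
          push_neg at hclt
          have hlt2 := hvslt (f x) (Finset.mem_image_of_mem f h1) hclt
          have hfL : f x < L := by
            by_contra hc2
            push_neg at hc2
            nlinarith [mul_nonneg (sub_nonneg.mpr hc2) hCvs.le]
          have hLf : L ≤ f x := le_trans hLa (le_trans hab (le_trans hbw0 h2))
          linarith
        · rintro ⟨h1, h2⟩
          exact ⟨h1, le_trans hcw h2⟩
      have hAws : Stmt8Aux.Aq π f B w0 = Stmt8Aux.Aq π f B vs := by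
        unfold Stmt8Aux.Aq; rw [hTS]
      have hCws : Stmt8Aux.Cq π f B w0 = Stmt8Aux.Cq π f B vs := by
        unfold Stmt8Aux.Cq; rw [hTS]
      rw [hAbw, hCbw, hAws, hCws, hAeq]
      nlinarith [mul_nonneg (sub_nonneg.mpr hLa) (hCnn vs)]
    · push_neg at hcw
      rcases hng w0 hw0val hcw with h0 | ⟨u, huval, hulw, hule⟩
      · rw [hAbw, hCbw]
        nlinarith [hCnn w0]
      · have hua : u ≤ a := by
          by_contra hc
          push_neg at hc
          obtain ⟨xu, hxuB, hxuf⟩ := Finset.mem_image.mp huval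
          have hbf : b ≤ f xu := himp xu hxuB (by rw [hxuf]; exact hc)
          have hge := hw0le xu (Finset.mem_filter.mpr ⟨hxuB, hbf⟩)
          rw [hxuf] at hge
          linarith
        rw [hAbw, hCbw]
        nlinarith [mul_nonneg (sub_nonneg.mpr hua) (hCnn w0)]
  -- main induction: H(L) ≥ 0
  have hmain := Stmt8Aux.mainInd π f B L hL (fun x _ => hπpos x) hfnn hkey
    B.card L le_rfl (Finset.card_filter_le _ _)
  -- notation for the superlevel set quantities
  set S := B.filter (fun x => L ≤ f x) with hSdef
  set Pm := ∑ x ∈ S, π x with hPmdef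
  set Cc := ∑ x ∈ S, π x * f x with hCcdef
  set Ac := ∑ x ∈ S, π x * f x ^ 2 with hAcdef
  obtain ⟨bs, hbsB, hbsf⟩ := Finset.mem_image.mp hvsval
  have hbsS : bs ∈ S := by
    rw [hSdef]
    exact Finset.mem_filter.mpr ⟨hbsB, by rw [hbsf]; exact hLvs⟩
  have hPm : 0 < Pm := by
    rw [hPmdef]
    exact Finset.sum_pos (fun x _ => hπpos x) ⟨bs, hbsS⟩
  have hAcv : Ac = Stmt8Aux.Aq π f B vs := by
    rw [hAcdef]
    unfold Stmt8Aux.Aq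
    rw [hSL]
  have hCcv : Cc = Stmt8Aux.Cq π f B vs := by
    rw [hCcdef]
    unfold Stmt8Aux.Cq
    rw [hSL]
  have hACL : Ac = 2 * L * Cc := by rw [hAcv, hCcv]; exact hAeq
  have hCcpos : 0 < Cc := by rw [hCcv]; exact hCvs
  -- expand H(L)
  have hHexp : ∑ x ∈ S, π x * (4 * f x / L - f x ^ 2 / L ^ 2 - 3)
      = 4 / L * Cc - 1 / L ^ 2 * Ac - 3 * Pm := by
    have e : ∀ x ∈ S, π x * (4 * f x / L - f x ^ 2 / L ^ 2 - 3)
        = 4 / L * (π x * f x) - 1 / L ^ 2 * (π x * f x ^ 2) - 3 * π x := by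
      intro x _
      ring
    rw [Finset.sum_congr rfl e, Finset.sum_sub_distrib, Finset.sum_sub_distrib,
      ← Finset.mul_sum, ← Finset.mul_sum, ← Finset.mul_sum, ← hCcdef, ← hAcdef, ← hPmdef]
  have hmain2 : (0:ℝ) ≤ 4 / L * Cc - 1 / L ^ 2 * Ac - 3 * Pm := by
    rw [← hHexp]
    exact hmain
  have hclear : 0 ≤ 4 * L * Cc - Ac - 3 * L ^ 2 * Pm := by
    have hid : 4 / L * Cc - 1 / L ^ 2 * Ac - 3 * Pm
        = (4 * L * Cc - Ac - 3 * L ^ 2 * Pm) / L ^ 2 := by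
      field_simp [ne_of_gt hL]
    rw [hid] at hmain2
    by_contra hneg
    push_neg at hneg
    have := div_neg_of_neg_of_pos hneg (by positivity : (0:ℝ) < L ^ 2)
    linarith
  -- C ≥ (3/2) L P  (since Ac = 2 L Cc)
  have hC32 : 3 * (L * Pm) ≤ 2 * Cc := by
    have : 2 * L * Cc - 3 * L ^ 2 * Pm ≥ 0 := by nlinarith
    nlinarith [mul_pos hL hPm, hL, sq_nonneg L]
  -- compute the goal sums
  have hgen : ∀ g : V → ℝ, (∑ x, condOn π S x * g x) = (∑ x ∈ S, π x * g x) / Pm := by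
    intro g
    have step1 : ∀ x : V, condOn π S x * g x = if x ∈ S then π x / Pm * g x else 0 := by
      intro x
      unfold condOn
      by_cases hx : x ∈ S
      · rw [if_pos hx, if_pos hx, ← hPmdef]
      · rw [if_neg hx, if_neg hx, zero_mul]
    rw [Finset.sum_congr rfl (fun x _ => step1 x)]
    rw [Finset.sum_ite_mem, Finset.univ_inter, Finset.sum_div]
    apply Finset.sum_congr rfl
    intro x _
    ring
  have hsum1 : (∑ x, condOn π S x * f x) = Cc / Pm := by
    rw [hgen f, ← hCcdef]
  have hsum2 : (∑ x, condOn π S x * f x ^ 2) = Ac / Pm := by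
    rw [hgen (fun x => f x ^ 2), ← hAcdef]
  -- Cauchy–Schwarz : Cc² ≤ Ac * Pm
  have hCS : Cc ^ 2 ≤ Ac * Pm := by
    have h0 : (0:ℝ) ≤ ∑ x ∈ S, π x * (f x * Pm - Cc) ^ 2 :=
      Finset.sum_nonneg fun x _ => mul_nonneg (hπpos x).le (sq_nonneg _)
    have hexp : ∑ x ∈ S, π x * (f x * Pm - Cc) ^ 2
        = Pm ^ 2 * Ac - 2 * Pm * Cc * Cc + Cc ^ 2 * Pm := by
      have e : ∀ x ∈ S, π x * (f x * Pm - Cc) ^ 2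
          = Pm ^ 2 * (π x * f x ^ 2) - 2 * Pm * Cc * (π x * f x) + Cc ^ 2 * π x := by
        intro x _
        ring
      rw [Finset.sum_congr rfl e, Finset.sum_add_distrib, Finset.sum_sub_distrib,
        ← Finset.mul_sum, ← Finset.mul_sum, ← Finset.mul_sum, ← hCcdef, ← hAcdef, ← hPmdef]
    rw [hexp] at h0
    nlinarith [hPm]
  -- final three goals
  refine ⟨L, hL, ?_, ?_, ?_⟩
  · rw [← hSdef, hsum1, lt_div_iff₀ hPm]
    nlinarith [mul_pos hL hPm, mul_pos (mul_pos hL hL) hPm]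
  · rw [← hSdef, hsum1, hsum2, hACL]
    ring
  · rw [← hSdef, hsum2, div_le_iff₀ hPm]
    nlinarith [mul_pos hL hPm, hCcpos, mul_pos hCcpos hCcpos]
end

section
/- Consider a birth and death chain P on [n] = {1,...,n} (P(i,j) > 0 iff |i-j| = 1, plus possibly holding, P(i,j)=0 if |i-j|>1) with stationary distribution π. For any interval B = {i, i+1, ..., j} with 1 ≤ i ≤ j ≤ n and j < n, the expected exit time satisfies E_{π_B}[T_{B^c}] ≤ E_{π_{[j]}}[T_{j+1}], where [j] = {1,...,j}. That is, exit from the interval started from stationary-conditioned measure on the interval is at most the hitting time of j+1 started from π conditioned on {1,...,j}. -/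
open Finset Matrix

namespace Stmt17Aux

variable {n : ℕ}

lemma pow_entry_nonneg {M : Matrix (Fin n) (Fin n) ℝ}
    (h : ∀ x y, 0 ≤ M x y) : ∀ (m : ℕ) (x y : Fin n), 0 ≤ (M ^ m) x y := by
  intro m
  induction m with
  | zero =>
    intro x y
    rw [pow_zero]
    by_cases hxy : x = y <;> simp [Matrix.one_apply, hxy]
  | succ m ih =>
    intro x y
    rw [pow_succ, Matrix.mul_apply]
    exact Finset.sum_nonneg fun z _ => mul_nonneg (ih x z) (h z y)

lemma pow_entry_le {M N : Matrix (Fin n) (Fin n) ℝ}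
    (hM : ∀ x y, 0 ≤ M x y) (hMN : ∀ x y, M x y ≤ N x y) :
    ∀ (m : ℕ) (x y : Fin n), (M ^ m) x y ≤ (N ^ m) x y := by
  intro m
  induction m with
  | zero => intro x y; rw [pow_zero, pow_zero]
  | succ m ih =>
    intro x y
    rw [pow_succ, Matrix.mul_apply, pow_succ, Matrix.mul_apply]
    refine Finset.sum_le_sum fun z _ => ?_
    exact mul_le_mul (ih x z) (hMN z y) (hM z y)
      (pow_entry_nonneg (fun a b => (hM a b).trans (hMN a b)) m x z)

lemma res_nonneg {P : Matrix (Fin n) (Fin n) ℝ} (hP : ∀ x y, 0 ≤ P x y)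
    (S : Finset (Fin n)) (x y : Fin n) : 0 ≤ res P S x y := by
  simp only [res]
  split
  · exact hP x y
  · exact le_rfl

lemma res_le_res {P : Matrix (Fin n) (Fin n) ℝ} (hP : ∀ x y, 0 ≤ P x y)
    {S T : Finset (Fin n)} (hST : S ⊆ T) (x y : Fin n) :
    res P S x y ≤ res P T x y := by
  simp only [res]
  by_cases h : x ∈ S ∧ y ∈ S
  · rw [if_pos h, if_pos ⟨hST h.1, hST h.2⟩]
  · rw [if_neg h]
    split
    · exact hP x y
    · exact le_rfl

lemma res_row_le_one {P : Matrix (Fin n) (Fin n) ℝ} (hP : IsStochastic P)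
    (S : Finset (Fin n)) (z : Fin n) : ∑ y, res P S z y ≤ 1 := by
  calc ∑ y, res P S z y ≤ ∑ y, P z y := by
        refine Finset.sum_le_sum fun y _ => ?_
        simp only [res]
        split
        · exact le_rfl
        · exact hP.1 z y
    _ = 1 := hP.2 z


section J
variable (P : Matrix (Fin n) (Fin n) ℝ) (j : Fin n)

noncomputable def g (m : ℕ) (x : Fin n) : ℝ := ∑ y, ((res P (Finset.Iic j)) ^ m) x y

noncomputable def hfun (x : Fin n) : ℝ := ∑' m, g P j m x

lemma g_zero (x : Fin n) : g P j 0 x = 1 := by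
  simp [g, Matrix.one_apply]

lemma g_nonneg (hP : ∀ x y, 0 ≤ P x y) (m : ℕ) (x : Fin n) : 0 ≤ g P j m x :=
  Finset.sum_nonneg fun y _ => pow_entry_nonneg (res_nonneg hP _) m x y

lemma g_succ (m : ℕ) (x : Fin n) :
    g P j (m + 1) x = ∑ z, res P (Finset.Iic j) x z * g P j m z := by
  unfold g
  rw [pow_succ']
  simp only [Matrix.mul_apply]
  rw [Finset.sum_comm]
  exact Finset.sum_congr rfl fun z _ => (Finset.mul_sum _ _ _).symm

lemma g_add (m k : ℕ) (x : Fin n) :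
    g P j (m + k) x = ∑ z, ((res P (Finset.Iic j)) ^ m) x z * g P j k z := by
  unfold g
  rw [pow_add]
  simp only [Matrix.mul_apply]
  rw [Finset.sum_comm]
  exact Finset.sum_congr rfl fun z _ => (Finset.mul_sum _ _ _).symm

lemma g_succ_le (hP : IsStochastic P) (m : ℕ) (x : Fin n) :
    g P j (m + 1) x ≤ g P j m x := by
  rw [g_add P j m 1]
  calc ∑ z, ((res P (Finset.Iic j)) ^ m) x z * g P j 1 z
      ≤ ∑ z, ((res P (Finset.Iic j)) ^ m) x z * 1 := by
        refine Finset.sum_le_sum fun z _ => ?_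
        refine mul_le_mul_of_nonneg_left ?_ (pow_entry_nonneg (res_nonneg hP.1 _) m x z)
        show g P j 1 z ≤ 1
        unfold g
        rw [pow_one]
        exact res_row_le_one hP _ z
    _ = g P j m x := by simp [g]

lemma g_mono (hP : IsStochastic P) {m m' : ℕ} (h : m ≤ m') (x : Fin n) :
    g P j m' x ≤ g P j m x := by
  induction m' with
  | zero => simp_all
  | succ k ih =>
    rcases Nat.lt_or_ge m (k+1) with hlt | hge
    · exact (g_succ_le P j hP k x).trans (ih (by omega))
    · have : m = k + 1 := by omega
      subst this
      exact le_rfl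

lemma g_le_one (hP : IsStochastic P) (m : ℕ) (x : Fin n) : g P j m x ≤ 1 := by
  have := g_mono P j hP (Nat.zero_le m) x
  rwa [g_zero] at this


lemma g_strict (hP : IsStochastic P)
    (hbdpos : ∀ a b : Fin n, |(a.val : ℤ) - b.val| = 1 → 0 < P a b)
    (hj : j.val + 1 < n) :
    ∀ k (hk : k ≤ j.val), g P j (k + 1) ⟨j.val - k, by omega⟩ < 1 := by
  intro k
  induction k with
  | zero =>
    intro hk
    have hxj : (⟨j.val - 0, by omega⟩ : Fin n) = j := by
      apply Fin.ext; simp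
    rw [hxj]
    set w : Fin n := ⟨j.val + 1, hj⟩ with hw
    have hPw : 0 < P j w := by
      apply hbdpos
      have : ((j.val : ℤ)) - ((w.val : ℤ)) = -1 := by
        simp only [hw]
        push_cast
        ring
      rw [this]
      norm_num
    have h1 : g P j 1 j = ∑ y, res P (Finset.Iic j) j y := by
      simp [g]
    rw [h1]
    have hwz : res P (Finset.Iic j) j w = 0 := by
      simp only [res]
      rw [if_neg]
      rintro ⟨-, hmem⟩
      rw [Finset.mem_Iic, Fin.le_def] at hmem
      simp only [hw] at hmem
      omega
    calc ∑ y, res P (Finset.Iic j) j y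
        = ∑ y ∈ Finset.univ.erase w, res P (Finset.Iic j) j y :=
          (Finset.sum_erase _ hwz).symm
      _ ≤ ∑ y ∈ Finset.univ.erase w, P j y := by
          refine Finset.sum_le_sum fun y _ => ?_
          simp only [res]
          split
          · exact le_rfl
          · exact hP.1 j y
      _ = (∑ y, P j y) - P j w := Finset.sum_erase_eq_sub (Finset.mem_univ w)
      _ = 1 - P j w := by rw [hP.2 j]
      _ < 1 := by linarith
  | succ k ih =>
    intro hk
    set a : ℕ := j.val - (k + 1) with ha
    have han : a < n := by omega
    have ha1 : a + 1 = j.val - k := by omega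
    set x : Fin n := ⟨a, han⟩ with hx
    set x' : Fin n := ⟨a + 1, by omega⟩ with hx'
    have hih : g P j (k + 1) x' < 1 := by
      have : x' = (⟨j.val - k, by omega⟩ : Fin n) := by apply Fin.ext; simp [hx', ha1]
      rw [this]
      exact ih (by omega)
    have hxJ : x ∈ Finset.Iic j := by rw [Finset.mem_Iic, Fin.le_def]; simp [hx]; omega
    have hx'J : x' ∈ Finset.Iic j := by rw [Finset.mem_Iic, Fin.le_def]; simp [hx']; omega
    have hres : res P (Finset.Iic j) x x' = P x x' := by
      simp only [res]
      rw [if_pos ⟨hxJ, hx'J⟩]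
    have hPpos : 0 < P x x' := by
      apply hbdpos
      have : ((x.val : ℤ)) - ((x'.val : ℤ)) = -1 := by
        simp only [hx, hx']
        push_cast
        ring
      rw [this]
      norm_num
    rw [g_succ]
    calc ∑ z, res P (Finset.Iic j) x z * g P j (k + 1) z
        = (∑ z ∈ Finset.univ.erase x', res P (Finset.Iic j) x z * g P j (k + 1) z)
            + res P (Finset.Iic j) x x' * g P j (k + 1) x' :=
          (Finset.sum_erase_add _ _ (Finset.mem_univ x')).symm
      _ ≤ (∑ z ∈ Finset.univ.erase x', res P (Finset.Iic j) x z)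
            + res P (Finset.Iic j) x x' * g P j (k + 1) x' := by
          refine add_le_add (Finset.sum_le_sum fun z hz => ?_) le_rfl
          calc res P (Finset.Iic j) x z * g P j (k + 1) z
                ≤ res P (Finset.Iic j) x z * 1 :=
                  mul_le_mul_of_nonneg_left (g_le_one P j hP _ z) (res_nonneg hP.1 _ x z)
            _ = res P (Finset.Iic j) x z := mul_one _
      _ < (∑ z ∈ Finset.univ.erase x', res P (Finset.Iic j) x z)
            + res P (Finset.Iic j) x x' * 1 := by
          have : res P (Finset.Iic j) x x' * g P j (k + 1) x'
              < res P (Finset.Iic j) x x' * 1 := by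
            rw [hres]
            exact mul_lt_mul_of_pos_left hih hPpos
          linarith
      _ = ∑ z, res P (Finset.Iic j) x z := by
          rw [mul_one]
          exact Finset.sum_erase_add _ _ (Finset.mem_univ x')
      _ ≤ 1 := res_row_le_one hP _ x

lemma g_lt_one (hP : IsStochastic P)
    (hbdpos : ∀ a b : Fin n, |(a.val : ℤ) - b.val| = 1 → 0 < P a b)
    (hj : j.val + 1 < n) (x : Fin n) : g P j n x < 1 := by
  rcases Nat.lt_or_ge j.val x.val with hgt | hle
  · -- x ∉ Iic j : row of res is zero, so g 1 x = 0
    have h1 : g P j 1 x = 0 := by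
      simp only [g, pow_one]
      refine Finset.sum_eq_zero fun y _ => ?_
      simp only [res]
      rw [if_neg]
      rintro ⟨hmem, -⟩
      rw [Finset.mem_Iic, Fin.le_def] at hmem
      omega
    have := g_mono P j hP (show 1 ≤ n by omega) x
    rw [h1] at this
    linarith
  · set k : ℕ := j.val - x.val with hk
    have hxk : (⟨j.val - k, by omega⟩ : Fin n) = x := by apply Fin.ext; simp [hk]; omega
    have h2 := g_strict P j hP hbdpos hj k (by omega)
    rw [hxk] at h2
    have := g_mono P j hP (show k + 1 ≤ n by omega) x
    linarith


lemma g_summable (hP : IsStochastic P)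
    (hbdpos : ∀ a b : Fin n, |(a.val : ℤ) - b.val| = 1 → 0 < P a b)
    (hj : j.val + 1 < n) (x : Fin n) :
    Summable (fun m => g P j m x) := by
  have hn0 : 0 < n := by omega
  obtain ⟨x0, -, hx0⟩ := Finset.exists_max_image Finset.univ (g P j n) ⟨j, Finset.mem_univ j⟩
  set M : ℝ := g P j n x0 with hM
  have hM0 : 0 ≤ M := g_nonneg P j hP.1 n x0
  have hM1 : M < 1 := g_lt_one P j hP hbdpos hj x0
  have key : ∀ (m : ℕ) (x : Fin n), g P j (m + n) x ≤ M * g P j m x := by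
    intro m x
    rw [g_add]
    calc ∑ z, ((res P (Finset.Iic j))^m) x z * g P j n z
        ≤ ∑ z, ((res P (Finset.Iic j))^m) x z * M := by
          refine Finset.sum_le_sum fun z _ => ?_
          exact mul_le_mul_of_nonneg_left (hx0 z (Finset.mem_univ z))
            (pow_entry_nonneg (res_nonneg hP.1 _) m x z)
      _ = M * g P j m x := by rw [← Finset.sum_mul]; unfold g; ring
  have bound : ∀ (m : ℕ) (x : Fin n), g P j m x ≤ M ^ (m / n) := by
    intro m
    induction m using Nat.strong_induction_on with
    | _ m ih =>
      intro x
      by_cases hm : m < n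
      · rw [Nat.div_eq_of_lt hm, pow_zero]
        exact g_le_one P j hP m x
      · push_neg at hm
        have h1 : (m - n) + n = m := by omega
        calc g P j m x = g P j ((m - n) + n) x := by rw [h1]
          _ ≤ M * g P j (m - n) x := key _ x
          _ ≤ M * M ^ ((m - n) / n) :=
              mul_le_mul_of_nonneg_left (ih (m - n) (by omega) x) hM0
          _ = M ^ ((m - n)/n + 1) := by ring
          _ = M ^ (m / n) := by rw [Nat.div_eq_sub_div hn0 hm]
  have block : ∀ N, ∑ m ∈ Finset.range (n * N), M ^ (m / n)
      = n * ∑ q ∈ Finset.range N, M ^ q := by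
    intro N
    induction N with
    | zero => simp
    | succ N ihN =>
      have hsplit : ∑ m ∈ Finset.range (n * (N+1)), M ^ (m / n)
          = ∑ m ∈ Finset.range (n * N), M ^ (m / n)
            + ∑ m ∈ Finset.Ico (n*N) (n*(N+1)), M ^ (m/n) := by
        rw [Finset.range_eq_Ico, Finset.range_eq_Ico]
        exact (Finset.sum_Ico_consecutive (fun m => M ^ (m / n)) (Nat.zero_le _)
          (show n * N ≤ n * (N+1) by rw [Nat.mul_succ]; omega)).symm
      rw [hsplit, ihN, Finset.sum_Ico_eq_sum_range]
      have hcard : n * (N+1) - n*N = n := by rw [Nat.mul_succ]; omega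
      rw [hcard]
      have hterm : ∀ r ∈ Finset.range n, M ^ ((n*N + r)/n) = M ^ N := by
        intro r hr
        rw [Finset.mem_range] at hr
        congr 1
        rw [Nat.mul_add_div hn0, Nat.div_eq_of_lt hr]
        omega
      rw [Finset.sum_congr rfl hterm, Finset.sum_const, Finset.card_range,
        Finset.sum_range_succ]
      push_cast
      ring
  refine summable_of_sum_range_le (c := n * (1 - M)⁻¹)
    (fun m => g_nonneg P j hP.1 m x) ?_
  intro N
  calc ∑ m ∈ Finset.range N, g P j m x ≤ ∑ m ∈ Finset.range N, M ^ (m/n) :=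
        Finset.sum_le_sum fun m _ => bound m x
    _ ≤ ∑ m ∈ Finset.range (n * N), M ^ (m/n) := by
        refine Finset.sum_le_sum_of_subset_of_nonneg ?_ (fun m _ _ => pow_nonneg hM0 _)
        exact Finset.range_subset_range.2 (Nat.le_mul_of_pos_left N hn0)
    _ = n * ∑ q ∈ Finset.range N, M ^ q := block N
    _ ≤ n * (1 - M)⁻¹ := by
        refine mul_le_mul_of_nonneg_left ?_ (by positivity)
        calc ∑ q ∈ Finset.range N, M ^ q ≤ ∑' q : ℕ, M ^ q :=
            Summable.sum_le_tsum _ (fun q _ => pow_nonneg hM0 _) (summable_geometric_of_lt_one hM0 hM1)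
          _ = (1 - M)⁻¹ := tsum_geometric_of_lt_one hM0 hM1

lemma hfun_rec (hP : IsStochastic P)
    (hbdpos : ∀ a b : Fin n, |(a.val : ℤ) - b.val| = 1 → 0 < P a b)
    (hj : j.val + 1 < n) (x : Fin n) :
    hfun P j x = 1 + ∑ z, res P (Finset.Iic j) x z * hfun P j z := by
  have hsum := g_summable P j hP hbdpos hj
  rw [hfun, Summable.tsum_eq_zero_add (hsum x), g_zero]
  congr 1
  rw [tsum_congr (fun m => g_succ P j m x)]
  rw [Summable.tsum_finsetSum (fun z _ => Summable.mul_left _ (hsum z))]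
  exact Finset.sum_congr rfl fun z _ => Summable.tsum_mul_left _ (hsum z)

end J

lemma entry_le_one {P : Matrix (Fin n) (Fin n) ℝ} (hP : IsStochastic P) (x y : Fin n) :
    P x y ≤ 1 := by
  have h := Finset.single_le_sum (f := P x) (fun z _ => hP.1 x z) (Finset.mem_univ y)
  rwa [hP.2 x] at h

lemma sum_two (P : Matrix (Fin n) (Fin n) ℝ)
    (hbd0 : ∀ a b : Fin n, 1 < |(a.val : ℤ) - b.val| → P a b = 0)
    (f : Fin n → ℝ) (h1n : 1 < n) :
    ∑ z, P ⟨0, by omega⟩ z * f z =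
      P ⟨0, by omega⟩ ⟨0, by omega⟩ * f ⟨0, by omega⟩
      + P ⟨0, by omega⟩ ⟨1, by omega⟩ * f ⟨1, by omega⟩ := by
  classical
  have hzero : ∀ z ∈ Finset.univ, z ∉ ({⟨0, by omega⟩, ⟨1, by omega⟩} : Finset (Fin n)) →
      P ⟨0, by omega⟩ z * f z = 0 := by
    intro z _ hz
    simp only [Finset.mem_insert, Finset.mem_singleton, Fin.ext_iff] at hz
    push_neg at hz
    have : P ⟨0, by omega⟩ z = 0 := by
      apply hbd0
      show (1 : ℤ) < |((0 : ℕ) : ℤ) - (z.val : ℤ)|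
      rw [lt_abs]
      omega
    rw [this, zero_mul]
  have hmem : (⟨0, by omega⟩ : Fin n) ∉ ({⟨1, by omega⟩} : Finset (Fin n)) := by
    simp [Fin.ext_iff]
  rw [← Finset.sum_subset (Finset.subset_univ _) hzero,
    Finset.sum_insert hmem, Finset.sum_singleton]

lemma sum_three (P : Matrix (Fin n) (Fin n) ℝ)
    (hbd0 : ∀ a b : Fin n, 1 < |(a.val : ℤ) - b.val| → P a b = 0)
    (f : Fin n → ℝ) (a : ℕ) (ha : 1 ≤ a) (han : a + 1 < n) :
    ∑ z, P ⟨a, by omega⟩ z * f z =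
      P ⟨a, by omega⟩ ⟨a - 1, by omega⟩ * f ⟨a - 1, by omega⟩
      + P ⟨a, by omega⟩ ⟨a, by omega⟩ * f ⟨a, by omega⟩
      + P ⟨a, by omega⟩ ⟨a + 1, by omega⟩ * f ⟨a + 1, by omega⟩ := by
  classical
  have hzero : ∀ z ∈ Finset.univ,
      z ∉ ({⟨a - 1, by omega⟩, ⟨a, by omega⟩, ⟨a + 1, by omega⟩} : Finset (Fin n)) →
      P ⟨a, by omega⟩ z * f z = 0 := by
    intro z _ hz
    simp only [Finset.mem_insert, Finset.mem_singleton, Fin.ext_iff] at hz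
    push_neg at hz
    have : P ⟨a, by omega⟩ z = 0 := by
      apply hbd0
      show (1 : ℤ) < |((a : ℕ) : ℤ) - (z.val : ℤ)|
      rw [lt_abs]
      omega
    rw [this, zero_mul]
  have hmem1 : (⟨a - 1, by omega⟩ : Fin n)
      ∉ ({⟨a, by omega⟩, ⟨a + 1, by omega⟩} : Finset (Fin n)) := by
    simp only [Finset.mem_insert, Finset.mem_singleton, Fin.ext_iff]
    omega
  have hmem2 : (⟨a, by omega⟩ : Fin n) ∉ ({⟨a + 1, by omega⟩} : Finset (Fin n)) := by
    simp only [Finset.mem_singleton, Fin.ext_iff]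
    omega
  rw [← Finset.sum_subset (Finset.subset_univ _) hzero,
    Finset.sum_insert hmem1, Finset.sum_insert hmem2, Finset.sum_singleton, add_assoc]

section J2
variable (P : Matrix (Fin n) (Fin n) ℝ) (j : Fin n)

lemma hfun_step (hP : IsStochastic P)
    (hbd0 : ∀ a b : Fin n, 1 < |(a.val : ℤ) - b.val| → P a b = 0)
    (hbdpos : ∀ a b : Fin n, |(a.val : ℤ) - b.val| = 1 → 0 < P a b)
    (hj : j.val + 1 < n) :
    ∀ (a : ℕ) (_ : a + 1 ≤ j.val),
      1 ≤ P ⟨a, by omega⟩ ⟨a + 1, by omega⟩ *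
        (hfun P j ⟨a, by omega⟩ - hfun P j ⟨a + 1, by omega⟩) := by
  have hfJconv : ∀ x : Fin n, x ∈ Finset.Iic j →
      (∑ z, res P (Finset.Iic j) x z * hfun P j z)
        = ∑ z, P x z * (if z ∈ Finset.Iic j then hfun P j z else 0) := by
    intro x hx
    refine Finset.sum_congr rfl fun z _ => ?_
    by_cases hz : z ∈ Finset.Iic j
    · rw [if_pos hz]
      simp only [res]
      rw [if_pos ⟨hx, hz⟩]
    · rw [if_neg hz, mul_zero]
      simp only [res]
      rw [if_neg (by tauto)]
      ring
  have hmemIic : ∀ (c : ℕ) (hc : c < n), c ≤ j.val → (⟨c, hc⟩ : Fin n) ∈ Finset.Iic j := by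
    intro c hc hcj
    rw [Finset.mem_Iic, Fin.le_def]
    exact hcj
  intro a
  induction a with
  | zero =>
    intro ha
    have heq := hfun_rec P j hP hbdpos hj ⟨0, by omega⟩
    rw [hfJconv _ (hmemIic 0 (by omega) (by omega)),
      sum_two P hbd0 _ (show 1 < n by omega)] at heq
    rw [if_pos (hmemIic 0 (by omega) (by omega)),
      if_pos (hmemIic 1 (by omega) (by omega))] at heq
    have hrow := sum_two P hbd0 (fun _ => 1) (show 1 < n by omega)
    simp only [mul_one] at hrow
    rw [hP.2] at hrow
    set h0 := hfun P j ⟨0, by omega⟩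
    set h1 := hfun P j ⟨1, by omega⟩
    set p := P ⟨0, by omega⟩ ⟨0, by omega⟩
    set c := P ⟨0, by omega⟩ ⟨1, by omega⟩
    have e1 : p * h0 + c * h0 = h0 := by
      calc p * h0 + c * h0 = (p + c) * h0 := by ring
        _ = 1 * h0 := by rw [← hrow]
        _ = h0 := one_mul _
    linarith [heq, e1]
  | succ a ih =>
    intro ha
    have ih' := ih (by omega)
    have heq := hfun_rec P j hP hbdpos hj ⟨a + 1, by omega⟩
    rw [hfJconv _ (hmemIic (a + 1) (by omega) (by omega)),
      sum_three P hbd0 _ (a + 1) (by omega) (by omega)] at heq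
    simp only [Nat.add_sub_cancel] at heq
    rw [if_pos (hmemIic a (by omega) (by omega)),
      if_pos (hmemIic (a + 1) (by omega) (by omega)),
      if_pos (hmemIic (a + 1 + 1) (by omega) (by omega))] at heq
    have hrow := sum_three P hbd0 (fun _ => 1) (a + 1) (by omega) (by omega)
    simp only [mul_one, Nat.add_sub_cancel] at hrow
    rw [hP.2] at hrow
    have hc'pos : 0 < P ⟨a, by omega⟩ ⟨a + 1, by omega⟩ := by
      apply hbdpos
      show |((a : ℕ) : ℤ) - ((a + 1 : ℕ) : ℤ)| = 1
      have : ((a : ℕ) : ℤ) - ((a + 1 : ℕ) : ℤ) = -1 := by push_cast; ring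
      rw [this]; norm_num
    set h0 := hfun P j ⟨a, by omega⟩
    set h1 := hfun P j ⟨a + 1, by omega⟩
    set h2 := hfun P j ⟨a + 1 + 1, by omega⟩
    set b := P ⟨a + 1, by omega⟩ ⟨a, by omega⟩
    set p := P ⟨a + 1, by omega⟩ ⟨a + 1, by omega⟩
    set c := P ⟨a + 1, by omega⟩ ⟨a + 1 + 1, by omega⟩
    have hd : 0 ≤ h0 - h1 := by
      by_contra hcon
      push_neg at hcon
      have := mul_neg_of_pos_of_neg hc'pos (show h0 - h1 < 0 by linarith)
      linarith
    have hb : 0 ≤ b := hP.1 _ _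
    have e1 : b * h1 + p * h1 + c * h1 = h1 := by
      calc b * h1 + p * h1 + c * h1 = (b + p + c) * h1 := by ring
        _ = 1 * h1 := by rw [← hrow]
        _ = h1 := one_mul _
    have e2 : 0 ≤ b * (h0 - h1) := mul_nonneg hb hd
    nlinarith [heq, e1, e2]

lemma hfun_anti (hP : IsStochastic P)
    (hbd0 : ∀ a b : Fin n, 1 < |(a.val : ℤ) - b.val| → P a b = 0)
    (hbdpos : ∀ a b : Fin n, |(a.val : ℤ) - b.val| = 1 → 0 < P a b)
    (hj : j.val + 1 < n) :
    ∀ (k a : ℕ) (_ : a + k ≤ j.val),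
      hfun P j ⟨a + k, by omega⟩ ≤ hfun P j ⟨a, by omega⟩ := by
  intro k
  induction k with
  | zero => intro a _; exact le_rfl
  | succ k ih =>
    intro a hak
    have hstep := hfun_step P j hP hbd0 hbdpos hj (a + k) (by omega)
    have hcpos : 0 < P ⟨a + k, by omega⟩ ⟨a + k + 1, by omega⟩ := by
      apply hbdpos
      show |((a + k : ℕ) : ℤ) - ((a + k + 1 : ℕ) : ℤ)| = 1
      have : ((a + k : ℕ) : ℤ) - ((a + k + 1 : ℕ) : ℤ) = -1 := by push_cast; ring
      rw [this]; norm_num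
    have h1 : hfun P j ⟨a + k + 1, by omega⟩ ≤ hfun P j ⟨a + k, by omega⟩ := by
      by_contra hcon
      push_neg at hcon
      have := mul_neg_of_pos_of_neg hcpos
        (show hfun P j ⟨a + k, by omega⟩ - hfun P j ⟨a + k + 1, by omega⟩ < 0 by linarith)
      linarith
    exact h1.trans (ih a (by omega))

lemma hfun_anti' (hP : IsStochastic P)
    (hbd0 : ∀ a b : Fin n, 1 < |(a.val : ℤ) - b.val| → P a b = 0)
    (hbdpos : ∀ a b : Fin n, |(a.val : ℤ) - b.val| = 1 → 0 < P a b)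
    (hj : j.val + 1 < n) (l m : Fin n) (hlm : l.val ≤ m.val) (hm : m.val ≤ j.val) :
    hfun P j m ≤ hfun P j l := by
  have h := hfun_anti P j hP hbd0 hbdpos hj (m.val - l.val) l.val (by omega)
  have e1 : (⟨l.val + (m.val - l.val), by omega⟩ : Fin n) = m := by
    apply Fin.ext; simp; omega
  have e2 : (⟨l.val, by omega⟩ : Fin n) = l := by apply Fin.ext; simp
  rwa [e1, e2] at h

end J2

lemma resC_pow_eq (P : Matrix (Fin n) (Fin n) ℝ) (j : Fin n)
    (hbd0 : ∀ a b : Fin n, 1 < |(a.val : ℤ) - b.val| → P a b = 0)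
    (hj : j.val + 1 < n) :
    ∀ (m : ℕ) (x y : Fin n), x.val ≤ j.val →
      ((res P ({(⟨j.val + 1, hj⟩ : Fin n)}ᶜ)) ^ m) x y
        = ((res P (Finset.Iic j)) ^ m) x y := by
  intro m
  induction m with
  | zero => intro x y _; rw [pow_zero, pow_zero]
  | succ m ih =>
    intro x y hx
    rw [pow_succ', pow_succ', Matrix.mul_apply, Matrix.mul_apply]
    refine Finset.sum_congr rfl fun z _ => ?_
    by_cases hz : z.val ≤ j.val
    · have h1 : res P ({(⟨j.val + 1, hj⟩ : Fin n)}ᶜ) x z = P x z := by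
        simp only [res]
        rw [if_pos]
        constructor <;>
          · simp only [Finset.mem_compl, Finset.mem_singleton, Fin.ext_iff]
            omega
      have h2 : res P (Finset.Iic j) x z = P x z := by
        simp only [res]
        rw [if_pos]
        constructor <;>
          · rw [Finset.mem_Iic, Fin.le_def]
            omega
      rw [h1, h2, ih z y hz]
    · have h2 : res P (Finset.Iic j) x z = 0 := by
        simp only [res]
        rw [if_neg]
        rintro ⟨-, hmem⟩
        rw [Finset.mem_Iic, Fin.le_def] at hmem
        omega
      have h1 : res P ({(⟨j.val + 1, hj⟩ : Fin n)}ᶜ) x z = 0 := by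
        simp only [res]
        split
        · next hcond =>
            have hzne : z.val ≠ j.val + 1 := by
              have := hcond.2
              simp only [Finset.mem_compl, Finset.mem_singleton, Fin.ext_iff] at this
              exact this
            apply hbd0
            rw [lt_abs]
            omega
        · rfl
      rw [h1, h2, zero_mul, zero_mul]

end Stmt17Aux

open Stmt17Aux in
theorem stmt_17' (n : ℕ) (hn : 2 ≤ n)
    (P : Matrix (Fin n) (Fin n) ℝ) (π : Fin n → ℝ)
    (hP : IsStochastic P)
    (hπpos : ∀ x, 0 < π x)
    (hbd0 : ∀ a b : Fin n, 1 < |(a.val : ℤ) - b.val| → P a b = 0)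
    (hbdpos : ∀ a b : Fin n, |(a.val : ℤ) - b.val| = 1 → 0 < P a b)
    (i j : Fin n) (hij : i ≤ j) (hj : j.val + 1 < n) :
    (∑' m : ℕ, ∑ x, ∑ y, condOn π (Finset.Icc i j) x * ((res P (Finset.Icc i j)) ^ m) x y)
      ≤ ∑' m : ℕ, ∑ x, ∑ y, condOn π (Finset.Iic j) x
          * ((res P ({(⟨j.val + 1, hj⟩ : Fin n)}ᶜ)) ^ m) x y := by
  classical
  have hPnn := hP.1
  set B : Finset (Fin n) := Finset.Icc i j with hB
  set J : Finset (Fin n) := Finset.Iic j with hJ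
  have hBJ : B ⊆ J := Finset.Icc_subset_Iic_self
  have hiB : i ∈ B := Finset.mem_Icc.mpr ⟨le_refl i, hij⟩
  have hZB : 0 < ∑ x ∈ B, π x := Finset.sum_pos (fun x _ => hπpos x) ⟨i, hiB⟩
  have hZJ : 0 < ∑ x ∈ J, π x :=
    Finset.sum_pos (fun x _ => hπpos x) ⟨j, Finset.mem_Iic.mpr le_rfl⟩
  have hμB : ∀ x, 0 ≤ condOn π B x := by
    intro x
    unfold condOn
    split
    · exact div_nonneg (hπpos x).le hZB.le
    · exact le_rfl
  have hμJ : ∀ x, 0 ≤ condOn π J x := by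
    intro x
    unfold condOn
    split
    · exact div_nonneg (hπpos x).le hZJ.le
    · exact le_rfl
  have hsumg : ∀ x, Summable (fun m => g P j m x) :=
    fun x => g_summable P j hP hbdpos hj x
  -- the J-killed chain survival sums
  have sumJB : Summable (fun m => ∑ x, condOn π B x * g P j m x) :=
    summable_sum fun x _ => Summable.mul_left _ (hsumg x)
  have sumJJ : Summable (fun m => ∑ x, condOn π J x * g P j m x) :=
    summable_sum fun x _ => Summable.mul_left _ (hsumg x)
  -- step 1 : termwise domination for the LHS
  have step1 : ∀ m, (∑ x, ∑ y, condOn π B x * ((res P B) ^ m) x y)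
      ≤ ∑ x, condOn π B x * g P j m x := by
    intro m
    refine Finset.sum_le_sum fun x _ => ?_
    rw [← Finset.mul_sum]
    refine mul_le_mul_of_nonneg_left ?_ (hμB x)
    refine Finset.sum_le_sum fun y _ => ?_
    exact pow_entry_le (res_nonneg hPnn B) (res_le_res hPnn hBJ) m x y
  have lhs_nonneg : ∀ m, 0 ≤ ∑ x, ∑ y, condOn π B x * ((res P B) ^ m) x y := by
    intro m
    refine Finset.sum_nonneg fun x _ => Finset.sum_nonneg fun y _ => ?_
    exact mul_nonneg (hμB x) (pow_entry_nonneg (res_nonneg hPnn B) m x y)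
  have lhs_summable : Summable (fun m => ∑ x, ∑ y, condOn π B x * ((res P B) ^ m) x y) :=
    Summable.of_nonneg_of_le lhs_nonneg step1 sumJB
  have ineq1 : (∑' m : ℕ, ∑ x, ∑ y, condOn π B x * ((res P B) ^ m) x y)
      ≤ ∑' m : ℕ, ∑ x, condOn π B x * g P j m x :=
    Summable.tsum_le_tsum step1 lhs_summable sumJB
  -- identify the RHS with the J-killed chain
  have eq2 : ∀ m, (∑ x, ∑ y, condOn π J x * ((res P ({(⟨j.val + 1, hj⟩ : Fin n)}ᶜ)) ^ m) x y)
      = ∑ x, condOn π J x * g P j m x := by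
    intro m
    refine Finset.sum_congr rfl fun x _ => ?_
    rw [← Finset.mul_sum]
    by_cases hx : x.val ≤ j.val
    · congr 1
      exact Finset.sum_congr rfl fun y _ => resC_pow_eq P j hbd0 hj m x y hx
    · have h0 : condOn π J x = 0 := by
        unfold condOn
        rw [if_neg]
        intro hmem
        rw [hJ, Finset.mem_Iic, Fin.le_def] at hmem
        omega
      rw [h0, zero_mul, zero_mul]
  have eq2' : (∑' m : ℕ, ∑ x, ∑ y, condOn π J x
        * ((res P ({(⟨j.val + 1, hj⟩ : Fin n)}ᶜ)) ^ m) x y)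
      = ∑' m : ℕ, ∑ x, condOn π J x * g P j m x := tsum_congr eq2
  -- exchange tsum and finite sums
  have exch : ∀ μ : Fin n → ℝ, (∑' m : ℕ, ∑ x, μ x * g P j m x)
      = ∑ x, μ x * hfun P j x := by
    intro μ
    rw [Summable.tsum_finsetSum fun x _ => Summable.mul_left _ (hsumg x)]
    exact Finset.sum_congr rfl fun x _ => Summable.tsum_mul_left _ (hsumg x)
  rw [eq2', exch]
  refine le_trans (ineq1.trans_eq (exch _)) ?_
  -- final measure comparison
  have hBsum : (∑ x, condOn π B x * hfun P j x)
      = (∑ x ∈ B, π x * hfun P j x) / (∑ b ∈ B, π b) := by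
    rw [← Finset.sum_subset (Finset.subset_univ B)
      (fun x _ hxB => by unfold condOn; rw [if_neg hxB, zero_mul]), Finset.sum_div]
    refine Finset.sum_congr rfl fun x hxB => ?_
    unfold condOn
    rw [if_pos hxB]
    ring
  have hJsum : (∑ x, condOn π J x * hfun P j x)
      = (∑ x ∈ J, π x * hfun P j x) / (∑ b ∈ J, π b) := by
    rw [← Finset.sum_subset (Finset.subset_univ J)
      (fun x _ hxJ => by unfold condOn; rw [if_neg hxJ, zero_mul]), Finset.sum_div]
    refine Finset.sum_congr rfl fun x hxJ => ?_
    unfold condOn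
    rw [if_pos hxJ]
    ring
  rw [hBsum, hJsum, div_le_div_iff₀ hZB hZJ]
  have key : (∑ x ∈ B, π x * hfun P j x) * (∑ x ∈ J \ B, π x)
      ≤ (∑ x ∈ J \ B, π x * hfun P j x) * (∑ x ∈ B, π x) := by
    have e1 : (∑ x ∈ B, π x * hfun P j x) * (∑ x ∈ J \ B, π x)
        = ∑ l ∈ J \ B, ∑ m ∈ B, (π m * hfun P j m) * π l := by
      rw [Finset.sum_mul_sum]
      exact Finset.sum_comm
    have e2 : (∑ x ∈ J \ B, π x * hfun P j x) * (∑ x ∈ B, π x)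
        = ∑ l ∈ J \ B, ∑ m ∈ B, (π l * hfun P j l) * π m :=
      Finset.sum_mul_sum _ _ _ _
    rw [e1, e2]
    refine Finset.sum_le_sum fun l hl => Finset.sum_le_sum fun m hm => ?_
    have hmB := Finset.mem_Icc.mp (by rwa [hB] at hm)
    have hlJB := Finset.mem_sdiff.mp hl
    have hlJ : l.val ≤ j.val := by
      have := Finset.mem_Iic.mp hlJB.1
      rwa [Fin.le_def] at this
    have hlm : l.val ≤ m.val := by
      have h1 : ¬ (i ≤ l ∧ l ≤ j) := fun hc => hlJB.2 (Finset.mem_Icc.mpr hc)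
      have h2 : i.val ≤ m.val := by have := hmB.1; rwa [Fin.le_def] at this
      rw [Fin.le_def, Fin.le_def] at h1
      omega
    have hmj : m.val ≤ j.val := by have := hmB.2; rwa [Fin.le_def] at this
    have hle : hfun P j m ≤ hfun P j l :=
      hfun_anti' P j hP hbd0 hbdpos hj l m hlm hmj
    calc (π m * hfun P j m) * π l = (π m * π l) * hfun P j m := by ring
      _ ≤ (π m * π l) * hfun P j l := by
          exact mul_le_mul_of_nonneg_left hle (mul_nonneg (hπpos m).le (hπpos l).le)
      _ = (π l * hfun P j l) * π m := by ring
  have hsplit1 : (∑ x ∈ J, π x * hfun P j x)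
      = (∑ x ∈ J \ B, π x * hfun P j x) + ∑ x ∈ B, π x * hfun P j x :=
    (Finset.sum_sdiff hBJ).symm
  have hsplit2 : (∑ x ∈ J, π x) = (∑ x ∈ J \ B, π x) + ∑ x ∈ B, π x :=
    (Finset.sum_sdiff hBJ).symm
  rw [hsplit1, hsplit2]
  nlinarith [key]


/-- for a birth and death chain on `{0,…,n-1}` and an interval
`B = {i,…,j}` with `j+1 < n`, `E_{π_B}[T_{Bᶜ}] ≤ E_{π_{{0,…,j}}}[T_{j+1}]`. -/
theorem stmt_17 (n : ℕ) (hn : 2 ≤ n)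
    (P : Matrix (Fin n) (Fin n) ℝ) (π : Fin n → ℝ)
    (hP : IsStochastic P) (hirr : IsIrreducibleMat P)
    (hπpos : ∀ x, 0 < π x) (hπsum : ∑ x, π x = 1)
    (hrev : IsReversible P π)
    (hbd0 : ∀ a b : Fin n, 1 < |(a.val : ℤ) - b.val| → P a b = 0)
    (hbdpos : ∀ a b : Fin n, |(a.val : ℤ) - b.val| = 1 → 0 < P a b)
    (i j : Fin n) (hij : i ≤ j) (hj : j.val + 1 < n) :
    expExit P (condOn π (Finset.Icc i j)) (Finset.Icc i j)
      ≤ expExit P (condOn π (Finset.Iic j)) ({(⟨j.val + 1, hj⟩ : Fin n)}ᶜ) := by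
  have h := stmt_17' n hn P π hP hπpos hbd0 hbdpos i j hij hj
  exact h
end
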